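/- arXiv:2602.09619 — 11 statements merged into one kernel-verified Lean document; each statement's English description precedes it below -/
import Mathlib

section
/- Let S be a nonempty finite set and let 1 ≤ k < n be integers. Let φ* be the ring homomorphism from ℝ[p_x : x ∈ S^n] to the polynomial ring over ℝ in the variables π(w) (w ∈ S^k) and a^(ℓ)(v) (k+1 ≤ ℓ ≤ n, v ∈ S^{k+1}) determined by φ*(p_x) = π(x_1,…,x_k)·∏_{ℓ=k+1}^n a^(ℓ)(x_{ℓ−k},…,x_ℓ). Then the kernel of φ* equals the ideal of ℝ[p_x : x ∈ S^n] generated by all binomials p_{IJT}·p_{I'JT'} − p_{IJT'}·p_{I'JT}, where r ranges over 1 ≤ r ≤ n−k−1, I, I' range over S^r, J ranges over S^k, T, T' range over S^{n−k−r}, and IJT denotes the concatenated path of length n. -/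
open MvPolynomial

namespace MSM

variable {S : Type*}

/-- First `k` entries of a path of length `n`. -/
def pathInit {n k : ℕ} (hk : k ≤ n) (x : Fin n → S) : Fin k → S :=
  fun i => x (Fin.castLE hk i)

/-- Length-`m` contiguous segment of a path starting at position `s` (0-indexed). -/
def seg {n : ℕ} (s m : ℕ) (h : s + m ≤ n) (x : Fin n → S) : Fin m → S :=
  fun t => x ⟨s + t.1, by have := t.isLt; omega⟩

/-- The contiguous window `(x_ℓ, …, x_{ℓ+k})` of length `k+1` starting at position `ℓ`
(0-indexed); these are the windows `(x_{ℓ-k},…,x_ℓ)`, `k+1 ≤ ℓ ≤ n`, in 1-indexed notation. -/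
def window {n k : ℕ} (hkn : k < n) (ℓ : Fin (n - k)) (x : Fin n → S) : Fin (k + 1) → S :=
  fun t => x ⟨ℓ.1 + t.1, by have := ℓ.isLt; have := t.isLt; omega⟩

/-- The nonhomogeneous `k`-th order multistate Markov parametrization `φ`. -/
def phi {n k : ℕ} (hkn : k < n) (pi : (Fin k → S) → ℝ)
    (a : Fin (n - k) → (Fin (k + 1) → S) → ℝ) : (Fin n → S) → ℝ :=
  fun x => pi (pathInit hkn.le x) * ∏ ℓ : Fin (n - k), a ℓ (window hkn ℓ x)

/-- The homogeneous `k`-th order multistate Markov parametrization `ψ`. -/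
def psi {n k : ℕ} (hkn : k < n) (pi : (Fin k → S) → ℝ)
    (a : (Fin (k + 1) → S) → ℝ) : (Fin n → S) → ℝ :=
  fun x => pi (pathInit hkn.le x) * ∏ ℓ : Fin (n - k), a (window hkn ℓ x)

/-- The vanishing ideal of a subset of `ℝ^{S^n}` inside `ℝ[p_x : x ∈ S^n]`. -/
noncomputable def vanishingIdeal {σ : Type*} (W : Set (σ → ℝ)) : Ideal (MvPolynomial σ ℝ) where
  carrier := { f | ∀ p ∈ W, MvPolynomial.eval p f = 0 }
  add_mem' := by
    intro f g hf hg p hp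
    simp only [Set.mem_setOf_eq] at *
    rw [map_add, hf p hp, hg p hp, add_zero]
  zero_mem' := by intro p hp; simp
  smul_mem' := by
    intro c f hf p hp
    simp only [Set.mem_setOf_eq] at *
    rw [smul_eq_mul, map_mul, hf p hp, mul_zero]

/-- The pullback `φ*` of the nonhomogeneous parametrization. -/
noncomputable def phiStar (S : Type*) (n k : ℕ) (hkn : k < n) :
    MvPolynomial (Fin n → S) ℝ →ₐ[ℝ]
      MvPolynomial ((Fin k → S) ⊕ (Fin (n - k) × (Fin (k + 1) → S))) ℝ :=
  aeval fun x => X (Sum.inl (pathInit hkn.le x)) *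
    ∏ ℓ : Fin (n - k), X (Sum.inr (ℓ, window hkn ℓ x))

/-- Concatenation `I ++ J ++ T` as a path of length `n`. -/
def concat3 {r k m n : ℕ} (h : r + k + m = n) (I : Fin r → S) (J : Fin k → S)
    (T : Fin m → S) : Fin n → S :=
  fun i => Fin.append (Fin.append I J) T (Fin.cast h.symm i)

lemma append_apply_lt {p q : ℕ} (u : Fin p → S) (v : Fin q → S) (j : Fin (p + q))
    (hj : j.1 < p) : Fin.append u v j = u ⟨j.1, hj⟩ := by
  exact (congrArg (Fin.append u v) (by ext; rfl : j = Fin.castAdd q ⟨j.1, hj⟩)).trans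
    (Fin.append_left u v _)

lemma append_apply_ge {p q : ℕ} (u : Fin p → S) (v : Fin q → S) (j : Fin (p + q))
    (hj : p ≤ j.1) : Fin.append u v j = v ⟨j.1 - p, by have := j.isLt; omega⟩ := by
  exact (congrArg (Fin.append u v)
    (by ext; simp; omega : j = Fin.natAdd p ⟨j.1 - p, by have := j.isLt; omega⟩)).trans
    (Fin.append_right u v _)

lemma concat3_apply_lt {r k m n : ℕ} (h : r + k + m = n) (I : Fin r → S) (J : Fin k → S)
    (T : Fin m → S) (i : Fin n) (hi : i.1 < r) : concat3 h I J T i = I ⟨i.1, hi⟩ := by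
  unfold concat3
  rw [append_apply_lt _ _ _ (show (Fin.cast h.symm i).1 < r + k by simp; omega),
    append_apply_lt _ _ _ (show i.1 < r from hi)]
  rfl

lemma concat3_apply_mid {r k m n : ℕ} (h : r + k + m = n) (I : Fin r → S) (J : Fin k → S)
    (T : Fin m → S) (i : Fin n) (hi1 : r ≤ i.1) (hi2 : i.1 < r + k) :
    concat3 h I J T i = J ⟨i.1 - r, by omega⟩ := by
  unfold concat3
  rw [append_apply_lt _ _ _ (show (Fin.cast h.symm i).1 < r + k from hi2),
    append_apply_ge _ _ _ (show r ≤ i.1 from hi1)]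
  rfl

lemma concat3_apply_ge {r k m n : ℕ} (h : r + k + m = n) (I : Fin r → S) (J : Fin k → S)
    (T : Fin m → S) (i : Fin n) (hi : r + k ≤ i.1) :
    concat3 h I J T i = T ⟨i.1 - (r + k), by have := i.isLt; omega⟩ := by
  unfold concat3
  rw [append_apply_ge _ _ _ (show r + k ≤ (Fin.cast h.symm i).1 from hi)]
  rfl

/-- positions `< r + k` don't depend on `T`. -/
lemma concat3_eq_of_lt {r k m n : ℕ} (h : r + k + m = n) (I : Fin r → S) (J : Fin k → S)
    (T T' : Fin m → S) (i : Fin n) (hi : i.1 < r + k) :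
    concat3 h I J T i = concat3 h I J T' i := by
  rcases lt_or_ge i.1 r with h1 | h1
  · rw [concat3_apply_lt h I J T i h1, concat3_apply_lt h I J T' i h1]
  · rw [concat3_apply_mid h I J T i h1 hi, concat3_apply_mid h I J T' i h1 hi]

/-- positions `≥ r` don't depend on `I`. -/
lemma concat3_eq_of_ge {r k m n : ℕ} (h : r + k + m = n) (I I' : Fin r → S) (J : Fin k → S)
    (T : Fin m → S) (i : Fin n) (hi : r ≤ i.1) :
    concat3 h I J T i = concat3 h I' J T i := by
  rcases lt_or_ge i.1 (r + k) with h1 | h1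
  · rw [concat3_apply_mid h I J T i hi h1, concat3_apply_mid h I' J T i hi h1]
  · rw [concat3_apply_ge h I J T i h1, concat3_apply_ge h I' J T i h1]

lemma concat3_seg {r k m n : ℕ} (h : r + k + m = n) (x : Fin n → S) :
    concat3 h (seg 0 r (by omega) x) (seg r k (by omega) x) (seg (r + k) m (by omega) x)
      = x := by
  funext i
  rcases lt_or_ge i.1 r with h1 | h1
  · rw [concat3_apply_lt h _ _ _ i h1]
    show x _ = x i
    congr 1; ext; simp
  · rcases lt_or_ge i.1 (r + k) with h2 | h2
    · rw [concat3_apply_mid h _ _ _ i h1 h2]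
      show x _ = x i
      congr 1; ext; simp; omega
    · rw [concat3_apply_ge h _ _ _ i h2]
      show x _ = x i
      congr 1; ext; simp; omega


variable {n k : ℕ}

noncomputable local instance : DecidableEq (Fin n → S) := Classical.decEq _

abbrev Tgt (S : Type*) (n k : ℕ) := (Fin k → S) ⊕ (Fin (n - k) × (Fin (k + 1) → S))

noncomputable def stat (hkn : k < n) (x : Fin n → S) : Tgt S n k →₀ ℕ :=
  Finsupp.single (Sum.inl (pathInit hkn.le x)) 1 +
    ∑ ℓ : Fin (n - k), Finsupp.single (Sum.inr (ℓ, window hkn ℓ x)) 1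

noncomputable def mstat (hkn : k < n) (U : Multiset (Fin n → S)) : Tgt S n k →₀ ℕ :=
  (U.map (stat hkn)).sum

lemma pathInit_concat3_eq {r m : ℕ} (hr : 1 ≤ r) (h : r + k + m = n)
    (I : Fin r → S) (J : Fin k → S) (T T' : Fin m → S) :
    pathInit (show k ≤ n by omega) (concat3 h I J T)
      = pathInit (by omega) (concat3 h I J T') := by
  funext i
  exact concat3_eq_of_lt h I J T T' _ (by have := i.isLt; simp [Fin.castLE]; omega)

lemma window_concat3_left {r m : ℕ} (hkn : k < n) (h : r + k + m = n)
    (I : Fin r → S) (J : Fin k → S) (T T' : Fin m → S) (ℓ : Fin (n - k)) (hℓ : ℓ.1 < r) :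
    window hkn ℓ (concat3 h I J T) = window hkn ℓ (concat3 h I J T') := by
  funext t
  exact concat3_eq_of_lt h I J T T' _ (by have := t.isLt; simp; omega)

lemma window_concat3_right {r m : ℕ} (hkn : k < n) (h : r + k + m = n)
    (I I' : Fin r → S) (J : Fin k → S) (T : Fin m → S) (ℓ : Fin (n - k)) (hℓ : r ≤ ℓ.1) :
    window hkn ℓ (concat3 h I J T) = window hkn ℓ (concat3 h I' J T) := by
  funext t
  exact concat3_eq_of_ge h I I' J T _ (by simp; omega)

lemma stat_swap {r m : ℕ} (hkn : k < n) (hr : 1 ≤ r) (h : r + k + m = n)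
    (I I' : Fin r → S) (J : Fin k → S) (T T' : Fin m → S) :
    stat hkn (concat3 h I J T) + stat hkn (concat3 h I' J T')
      = stat hkn (concat3 h I J T') + stat hkn (concat3 h I' J T) := by
  unfold stat
  rw [add_add_add_comm, add_add_add_comm
    (Finsupp.single (Sum.inl (pathInit hkn.le (concat3 h I J T'))) 1)]
  congr 1
  · rw [pathInit_concat3_eq hr h I J T T', pathInit_concat3_eq hr h I' J T' T]
  · rw [← Finset.sum_add_distrib, ← Finset.sum_add_distrib]
    refine Finset.sum_congr rfl fun ℓ _ => ?_
    rcases lt_or_ge ℓ.1 r with hℓ | hℓ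
    · rw [window_concat3_left hkn h I J T T' ℓ hℓ, window_concat3_left hkn h I' J T' T ℓ hℓ]
    · rw [window_concat3_right hkn h I I' J T ℓ hℓ, window_concat3_right hkn h I' I J T' ℓ hℓ,
        add_comm]


lemma one_le_stat_inl (hkn : k < n) (x : Fin n → S) :
    1 ≤ stat hkn x (Sum.inl (pathInit hkn.le x)) := by
  unfold stat
  rw [Finsupp.add_apply, Finsupp.single_eq_same]
  exact Nat.le_add_right 1 _

lemma one_le_stat_inr (hkn : k < n) (x : Fin n → S) (ℓ : Fin (n - k)) :
    1 ≤ stat hkn x (Sum.inr (ℓ, window hkn ℓ x)) := by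
  unfold stat
  rw [Finsupp.add_apply, Finsupp.finset_sum_apply]
  refine le_add_of_nonneg_of_le (Nat.zero_le _) ?_
  have h2 := Finset.single_le_sum (f := fun ℓ' : Fin (n - k) =>
      (Finsupp.single (Sum.inr (ℓ', window hkn ℓ' x) : Tgt S n k) (1 : ℕ))
        (Sum.inr (ℓ, window hkn ℓ x)))
    (fun i _ => Nat.zero_le _) (Finset.mem_univ ℓ)
  simpa using h2

lemma stat_inl_ne (hkn : k < n) {x : Fin n → S} {w : Fin k → S}
    (h : stat hkn x (Sum.inl w) ≠ 0) : pathInit hkn.le x = w := by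
  unfold stat at h
  rw [Finsupp.add_apply, Finsupp.finset_sum_apply,
    Finset.sum_eq_zero (fun ℓ _ => Finsupp.single_eq_of_ne (by simp)), add_zero] at h
  by_contra hc
  exact h (Finsupp.single_eq_of_ne' (by simpa using hc))

lemma stat_inr_ne (hkn : k < n) {x : Fin n → S} {ℓ : Fin (n - k)} {v : Fin (k + 1) → S}
    (h : stat hkn x (Sum.inr (ℓ, v)) ≠ 0) : window hkn ℓ x = v := by
  unfold stat at h
  rw [Finsupp.add_apply, Finsupp.single_eq_of_ne (by simp), zero_add,
    Finsupp.finset_sum_apply] at h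
  obtain ⟨ℓ', _, h'⟩ := Finset.exists_ne_zero_of_sum_ne_zero h
  have : (Sum.inr (ℓ', window hkn ℓ' x) : Tgt S n k) = Sum.inr (ℓ, v) := by
    by_contra hc
    exact h' (Finsupp.single_eq_of_ne' hc)
  obtain ⟨h1, h2⟩ := Prod.mk.injEq _ _ _ _ ▸ Sum.inr.inj this
  subst h1
  exact h2

lemma mstat_cons (hkn : k < n) (x : Fin n → S) (U : Multiset (Fin n → S)) :
    mstat hkn (x ::ₘ U) = stat hkn x + mstat hkn U := by
  simp [mstat]

lemma mstat_apply (hkn : k < n) (U : Multiset (Fin n → S)) (t : Tgt S n k) :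
    mstat hkn U t = (U.map fun x => stat hkn x t).sum := by
  have h1 := map_multiset_sum (Finsupp.applyAddHom (M := ℕ) t) (U.map (stat hkn))
  simpa [mstat, Multiset.map_map] using h1

lemma exists_of_mstat_pos (hkn : k < n) {U : Multiset (Fin n → S)} {t : Tgt S n k}
    (h : mstat hkn U t ≠ 0) : ∃ x ∈ U, stat hkn x t ≠ 0 := by
  by_contra hc
  push_neg at hc
  refine h ?_
  rw [mstat_apply]
  exact Multiset.sum_eq_zero fun a ha => by
    obtain ⟨x, hx, rfl⟩ := Multiset.mem_map.mp ha
    exact hc x hx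

lemma stat_le_mstat (hkn : k < n) {U : Multiset (Fin n → S)} {x : Fin n → S} (hx : x ∈ U)
    (t : Tgt S n k) : stat hkn x t ≤ mstat hkn U t := by
  rw [← Multiset.cons_erase hx, mstat_cons, Finsupp.add_apply]
  exact Nat.le_add_right _ _

lemma exists_init {hkn : k < n} {U V : Multiset (Fin n → S)} (h : mstat hkn U = mstat hkn V)
    {x : Fin n → S} (hx : x ∈ U) : ∃ y ∈ V, pathInit hkn.le y = pathInit hkn.le x := by
  have h1 : mstat hkn V (Sum.inl (pathInit hkn.le x)) ≠ 0 := by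
    rw [← h]
    have := (one_le_stat_inl hkn x).trans (stat_le_mstat hkn hx _)
    omega
  obtain ⟨y, hy, hs⟩ := exists_of_mstat_pos hkn h1
  exact ⟨y, hy, stat_inl_ne hkn hs⟩

lemma exists_window {hkn : k < n} {U V : Multiset (Fin n → S)} (h : mstat hkn U = mstat hkn V)
    {x : Fin n → S} (hx : x ∈ U) (ℓ : Fin (n - k)) :
    ∃ y ∈ V, window hkn ℓ y = window hkn ℓ x := by
  have h1 : mstat hkn V (Sum.inr (ℓ, window hkn ℓ x)) ≠ 0 := by
    rw [← h]
    have := (one_le_stat_inr hkn x ℓ).trans (stat_le_mstat hkn hx _)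
    omega
  obtain ⟨y, hy, hs⟩ := exists_of_mstat_pos hkn h1
  exact ⟨y, hy, stat_inr_ne hkn hs⟩

lemma eq_zero_of_mstat_eq_zero {hkn : k < n} {V : Multiset (Fin n → S)}
    (h : mstat hkn V = 0) : V = 0 := by
  by_contra hc
  obtain ⟨y, hy⟩ := Multiset.exists_mem_of_ne_zero hc
  have := (one_le_stat_inl hkn y).trans (stat_le_mstat hkn hy _)
  rw [h] at this
  simp at this

lemma mstat_erase {hkn : k < n} {U V : Multiset (Fin n → S)} {x : Fin n → S}
    (hxU : x ∈ U) (hxV : x ∈ V) (h : mstat hkn U = mstat hkn V) :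
    mstat hkn (U.erase x) = mstat hkn (V.erase x) := by
  have : stat hkn x + mstat hkn (U.erase x) = stat hkn x + mstat hkn (V.erase x) := by
    rw [← mstat_cons, ← mstat_cons, Multiset.cons_erase hxU, Multiset.cons_erase hxV, h]
  exact add_left_cancel this

/-- product of variables of a multiset of paths -/
noncomputable def PPol (U : Multiset (Fin n → S)) : MvPolynomial (Fin n → S) ℝ :=
  (U.map X).prod

lemma PPol_zero : PPol (0 : Multiset (Fin n → S)) = 1 := rfl

lemma PPol_cons (x : Fin n → S) (U : Multiset (Fin n → S)) :
    PPol (x ::ₘ U) = X x * PPol U := by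
  simp [PPol]

lemma monomial_one_prod {ι τ : Type*} (s : Finset ι) (g : ι → (τ →₀ ℕ)) :
    (∏ i ∈ s, (monomial (g i) (1 : ℝ))) = monomial (∑ i ∈ s, g i) 1 := by
  classical
  induction s using Finset.induction_on with
  | empty => simp [monomial_zero']
  | insert _ _ hx ih =>
      rw [Finset.prod_insert hx, Finset.sum_insert hx, ih, monomial_mul, one_mul]

lemma phiStar_X (hkn : k < n) (x : Fin n → S) :
    phiStar S n k hkn (X x) = monomial (stat hkn x) 1 := by
  rw [phiStar, aeval_X, stat]
  have hX : ∀ t : Tgt S n k, (X t : MvPolynomial (Tgt S n k) ℝ)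
      = monomial (Finsupp.single t 1) 1 := fun t => by
    rw [← X_pow_eq_monomial, pow_one]
  rw [hX]
  rw [Finset.prod_congr rfl fun ℓ _ => hX (Sum.inr (ℓ, window hkn ℓ x))]
  rw [monomial_one_prod, monomial_mul, one_mul]

lemma phiStar_PPol (hkn : k < n) (U : Multiset (Fin n → S)) :
    phiStar S n k hkn (PPol U) = monomial (mstat hkn U) 1 := by
  induction U using Multiset.induction_on with
  | empty => simp [PPol_zero, mstat, monomial_zero']
  | cons x U ih =>
      rw [PPol_cons, map_mul, phiStar_X, ih, mstat_cons, monomial_mul, one_mul]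

lemma PPol_toMultiset (u : (Fin n → S) →₀ ℕ) :
    PPol u.toMultiset = monomial u 1 := by
  induction u using Finsupp.induction with
  | zero => simp [PPol_zero, monomial_zero']
  | single_add a b f _ _ ih =>
      rw [Finsupp.toMultiset_add, PPol, Multiset.map_add, Multiset.prod_add,
        ← PPol, ← PPol, ih, Finsupp.toMultiset_single, PPol]
      rw [show ((b • {a} : Multiset (Fin n → S)).map X).prod = (X a : MvPolynomial (Fin n → S) ℝ) ^ b
        by simp [Multiset.nsmul_singleton]]
      rw [X_pow_eq_monomial, monomial_mul, one_mul]

/-- the set of "statistic binomials" -/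
noncomputable def BSet (hkn : k < n) : Set (MvPolynomial (Fin n → S) ℝ) :=
  { g | ∃ U V : Multiset (Fin n → S), mstat hkn U = mstat hkn V ∧ g = PPol U - PPol V }

lemma BSet_subset_ker (hkn : k < n) : BSet (S := S) hkn ⊆ RingHom.ker (phiStar S n k hkn) := by
  rintro g ⟨U, V, hUV, rfl⟩
  rw [SetLike.mem_coe, RingHom.mem_ker, map_sub, phiStar_PPol, phiStar_PPol, hUV, sub_self]

noncomputable def statF (hkn : k < n) (u : (Fin n → S) →₀ ℕ) : Tgt S n k →₀ ℕ :=
  mstat hkn u.toMultiset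

lemma phiStar_monomial (hkn : k < n) (u : (Fin n → S) →₀ ℕ) (c : ℝ) :
    phiStar S n k hkn (monomial u c) = monomial (statF hkn u) c := by
  have : (monomial u c : MvPolynomial (Fin n → S) ℝ) = C c * monomial u 1 := by
    rw [C_mul_monomial, mul_one]
  rw [this, map_mul, ← PPol_toMultiset, phiStar_PPol]
  rw [show phiStar S n k hkn (C c) = C c from AlgHom.commutes _ c]
  rw [C_mul_monomial, mul_one, statF]

lemma ker_le_span_BSet (hkn : k < n) :
    RingHom.ker (phiStar S n k hkn) ≤ Ideal.span (BSet (S := S) hkn) := by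
  classical
  suffices H : ∀ (N : ℕ) (f : MvPolynomial (Fin n → S) ℝ), f.support.card ≤ N →
      f ∈ RingHom.ker (phiStar S n k hkn) → f ∈ Ideal.span (BSet (S := S) hkn) by
    intro f hf; exact H _ f le_rfl hf
  intro N
  induction N with
  | zero =>
      intro f hcard _
      rw [Nat.le_zero, Finset.card_eq_zero, support_eq_empty] at hcard
      rw [hcard]; exact zero_mem _
  | succ N ih =>
      intro f hcard hker
      by_cases h0 : f = 0
      · rw [h0]; exact zero_mem _
      obtain ⟨u, hu⟩ := Finset.nonempty_of_ne_empty (by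
        simpa [support_eq_empty] using h0 : f.support ≠ ∅)
      -- coefficient sum over the fiber is zero
      have hphif : phiStar S n k hkn f = 0 := RingHom.mem_ker.mp hker
      have hcoeff : ∑ v ∈ f.support, (if statF hkn v = statF hkn u then coeff v f else 0) = 0 := by
        have h1 : coeff (statF hkn u) (phiStar S n k hkn f) = 0 := by rw [hphif]; simp
        rw [show phiStar S n k hkn f
            = ∑ v ∈ f.support, monomial (statF hkn v) (coeff v f) by
          conv_lhs => rw [f.as_sum]
          rw [map_sum]
          exact Finset.sum_congr rfl fun v _ => phiStar_monomial hkn v _] at h1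
        rw [coeff_sum] at h1
        calc ∑ v ∈ f.support, (if statF hkn v = statF hkn u then coeff v f else 0)
            = ∑ v ∈ f.support, coeff (statF hkn u) (monomial (statF hkn v) (coeff v f)) :=
              Finset.sum_congr rfl fun v _ => (coeff_monomial _ _ _).symm
          _ = 0 := h1
      -- find a partner
      have hexists : ∃ v ∈ f.support, v ≠ u ∧ statF hkn v = statF hkn u := by
        by_contra hc
        push_neg at hc
        rw [Finset.sum_eq_single u (fun v hv hvu => by
            rcases eq_or_ne (statF hkn v) (statF hkn u) with h' | h'
            · exact absurd h' (hc v hv hvu)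
            · rw [if_neg h']) (fun h => absurd hu h), if_pos rfl] at hcoeff
        exact (mem_support_iff.mp hu) hcoeff
      obtain ⟨v, hv, hvu, hstat⟩ := hexists
      set b : MvPolynomial (Fin n → S) ℝ := monomial v 1 - monomial u 1 with hb
      have hbB : b ∈ BSet (S := S) hkn :=
        ⟨v.toMultiset, u.toMultiset, hstat, by rw [hb, PPol_toMultiset, PPol_toMultiset]⟩
      set g : MvPolynomial (Fin n → S) ℝ := f - C (coeff v f) * b with hg
      have hgker : g ∈ RingHom.ker (phiStar S n k hkn) := by
        refine sub_mem hker (Ideal.mul_mem_left _ _ ?_)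
        exact BSet_subset_ker hkn hbB
      have hgv : coeff v g = 0 := by
        simp [hg, hb, coeff_sub, coeff_C_mul, coeff_monomial, Ne.symm hvu]
      have hgw : ∀ w, w ≠ v → w ≠ u → coeff w g = coeff w f := by
        intro w h1 h2
        simp [hg, hb, coeff_sub, coeff_C_mul, coeff_monomial, Ne.symm h1, Ne.symm h2]
      have hsupp : g.support ⊆ f.support.erase v := by
        intro w hw
        rw [mem_support_iff] at hw
        have hwv : w ≠ v := by rintro rfl; exact hw hgv
        rw [Finset.mem_erase]
        refine ⟨hwv, ?_⟩
        rcases eq_or_ne w u with rfl | hwu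
        · exact hu
        · rw [mem_support_iff]; rw [hgw w hwv hwu] at hw; exact hw
      have hcard' : g.support.card ≤ N := by
        have := Finset.card_le_card hsupp
        have h2 : (f.support.erase v).card < f.support.card := Finset.card_erase_lt_of_mem hv
        omega
      have hgspan := ih g hcard' hgker
      have : f = g + C (coeff v f) * b := by rw [hg]; ring
      rw [this]
      exact add_mem hgspan (Ideal.mul_mem_left _ _ (Ideal.subset_span hbB))


noncomputable def Gens (S : Type*) (n k : ℕ) : Set (MvPolynomial (Fin n → S) ℝ) :=
  { f : MvPolynomial (Fin n → S) ℝ |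
    ∃ (r : ℕ) (_ : 1 ≤ r) (_ : r + k + 1 ≤ n)
      (I I' : Fin r → S) (J : Fin k → S) (T T' : Fin (n - (r + k)) → S),
      f = X (concat3 (Nat.add_sub_of_le (by omega)) I J T) * X (concat3 (Nat.add_sub_of_le (by omega)) I' J T')
        - X (concat3 (Nat.add_sub_of_le (by omega)) I J T') * X (concat3 (Nat.add_sub_of_le (by omega)) I' J T) }

lemma moveM {hkn : k < n} {U : Multiset (Fin n → S)} {x : Fin n → S} (hx : x ∈ U) :
    ∀ (d j : ℕ), n ≤ j + d → k ≤ j → ∀ V : Multiset (Fin n → S),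
      mstat hkn V = mstat hkn U →
      (∃ y ∈ V, ∀ i : Fin n, i.1 < j → y i = x i) →
      ∃ V', x ∈ V' ∧ mstat hkn V' = mstat hkn U ∧
        PPol V - PPol V' ∈ Ideal.span (Gens S n k) := by
  intro d
  induction d with
  | zero =>
      rintro j hnd hkj V hV ⟨y, hyV, hagree⟩
      have hyx : y = x := funext fun i => hagree i (lt_of_lt_of_le i.isLt (by omega))
      exact ⟨V, hyx ▸ hyV, hV, by rw [sub_self]; exact zero_mem _⟩
  | succ d ih =>
      rintro j hnd hkj V hV ⟨y, hyV, hagree⟩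
      rcases le_or_gt n j with hnj | hjn
      · have hyx : y = x := funext fun i => hagree i (lt_of_lt_of_le i.isLt (by omega))
        exact ⟨V, hyx ▸ hyV, hV, by rw [sub_self]; exact zero_mem _⟩
      · by_cases hxy : y ⟨j, hjn⟩ = x ⟨j, hjn⟩
        · refine ih (j + 1) (by omega) (by omega) V hV ⟨y, hyV, fun i hi => ?_⟩
          rcases lt_or_eq_of_le (Nat.lt_succ_iff.mp hi) with h | h
          · exact hagree i h
          · have : i = ⟨j, hjn⟩ := Fin.ext h
            rw [this]; exact hxy
        · -- use a window partner
          have hℓlt : j - k < n - k := by omega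
          obtain ⟨y', hy'V, hwin⟩ := exists_window hV.symm hx ⟨j - k, hℓlt⟩
          have hy'x : ∀ i : Fin n, j - k ≤ i.1 → i.1 ≤ j → y' i = x i := by
            intro i h1 h2
            have ht : i.1 - (j - k) < k + 1 := by omega
            have := congrFun hwin ⟨i.1 - (j - k), ht⟩
            have hi : (⟨j - k + (i.1 - (j - k)), by omega⟩ : Fin n) = i :=
              Fin.ext (by simp; omega)
            rwa [show window hkn ⟨j - k, hℓlt⟩ y' ⟨i.1 - (j - k), ht⟩
                = y' ⟨j - k + (i.1 - (j - k)), by omega⟩ from rfl,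
              show window hkn ⟨j - k, hℓlt⟩ x ⟨i.1 - (j - k), ht⟩
                = x ⟨j - k + (i.1 - (j - k)), by omega⟩ from rfl, hi] at this
          by_cases hjk : j = k
          · refine ih (j + 1) (by omega) (by omega) V hV
              ⟨y', hy'V, fun i hi => hy'x i (by omega) (by omega)⟩
          · -- j > k : perform a move
            have hr : 1 ≤ j - k := by omega
            have hco : (j - k) + k + (n - ((j - k) + k)) = n := by omega
            have hy'jf : y' ⟨j, hjn⟩ = x ⟨j, hjn⟩ := hy'x ⟨j, hjn⟩ (by show j - k ≤ j; omega) (by show j ≤ j; omega)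
            have hyy' : y ≠ y' := fun h => hxy (by rw [h]; exact hy'jf)
            have hy'mem : y' ∈ V.erase y := (Multiset.mem_erase_of_ne (Ne.symm hyy')).mpr hy'V
            obtain ⟨V₀, rfl⟩ : ∃ V₀, V = y ::ₘ y' ::ₘ V₀ :=
              ⟨(V.erase y).erase y',
                by rw [Multiset.cons_erase hy'mem, Multiset.cons_erase hyV]⟩
            -- decompositions
            have hJb : seg (j - k) k (by omega) y' = seg (j - k) k (by omega) y := by
              funext t
              show y' _ = y _
              have htlt : (j - k) + t.1 < n := by have := t.isLt; omega
              rw [hy'x ⟨(j - k) + t.1, htlt⟩ (by simp) (by have := t.isLt; simp; omega),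
                hagree ⟨(j - k) + t.1, htlt⟩ (by have := t.isLt; simp; omega)]
            have hy_eq : y = concat3 hco (seg 0 (j - k) (by omega) y)
                (seg (j - k) k (by omega) y) (seg ((j - k) + k) (n - ((j - k) + k)) (by omega) y) :=
              (concat3_seg hco y).symm
            have hy'_eq : y' = concat3 hco (seg 0 (j - k) (by omega) y')
                (seg (j - k) k (by omega) y)
                (seg ((j - k) + k) (n - ((j - k) + k)) (by omega) y') := by
              conv_lhs => rw [← concat3_seg hco y']
              rw [hJb]
            set I : Fin (j - k) → S := seg 0 (j - k) (by omega) y with hI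
            set I' : Fin (j - k) → S := seg 0 (j - k) (by omega) y' with hI'
            set Jb : Fin k → S := seg (j - k) k (by omega) y with hJbdef
            set T : Fin (n - ((j - k) + k)) → S :=
              seg ((j - k) + k) (n - ((j - k) + k)) (by omega) y with hT
            set T' : Fin (n - ((j - k) + k)) → S :=
              seg ((j - k) + k) (n - ((j - k) + k)) (by omega) y' with hT'
            have hswap := stat_swap hkn hr hco I I' Jb T T'
            rw [← hy_eq, ← hy'_eq] at hswap
            have hVcstat : mstat hkn
                (concat3 hco I Jb T' ::ₘ concat3 hco I' Jb T ::ₘ V₀) = mstat hkn U := by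
              rw [← hV, mstat_cons, mstat_cons, mstat_cons, mstat_cons,
                ← add_assoc, ← add_assoc, ← hswap]
            have hgen : (X (concat3 hco I Jb T) * X (concat3 hco I' Jb T')
                - X (concat3 hco I Jb T') * X (concat3 hco I' Jb T) :
                  MvPolynomial (Fin n → S) ℝ) ∈ Gens S n k :=
              ⟨j - k, hr, by omega, I, I', Jb, T, T', rfl⟩
            have hdiff : PPol (y ::ₘ y' ::ₘ V₀)
                - PPol (concat3 hco I Jb T' ::ₘ concat3 hco I' Jb T ::ₘ V₀)
                ∈ Ideal.span (Gens S n k) := by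
              have hfact : PPol (y ::ₘ y' ::ₘ V₀)
                  - PPol (concat3 hco I Jb T' ::ₘ concat3 hco I' Jb T ::ₘ V₀)
                  = (X (concat3 hco I Jb T) * X (concat3 hco I' Jb T')
                    - X (concat3 hco I Jb T') * X (concat3 hco I' Jb T)) * PPol V₀ := by
                rw [PPol_cons, PPol_cons, PPol_cons, PPol_cons]
                conv_lhs => rw [hy_eq, hy'_eq]
                ring
              rw [hfact]
              exact Ideal.mul_mem_right _ _ (Ideal.subset_span hgen)
            have hagree'' : ∀ i : Fin n, i.1 < j + 1 → concat3 hco I Jb T' i = x i := by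
              intro i hi
              rcases lt_or_ge i.1 ((j - k) + k) with h1 | h1
              · rw [concat3_eq_of_lt hco I Jb T' T i h1, ← hy_eq]
                exact hagree i (by omega)
              · rw [concat3_eq_of_ge hco I I' Jb T' i (by omega), ← hy'_eq]
                have hij : i = ⟨j, hjn⟩ := Fin.ext (by show i.1 = j; omega)
                rw [hij]; exact hy'jf
            obtain ⟨V', hxV', hstat', hdiff'⟩ := ih (j + 1) (by omega) (by omega)
              (concat3 hco I Jb T' ::ₘ concat3 hco I' Jb T ::ₘ V₀) hVcstat
              ⟨concat3 hco I Jb T', Multiset.mem_cons_self _ _, hagree''⟩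
            refine ⟨V', hxV', hstat', ?_⟩
            have : PPol (y ::ₘ y' ::ₘ V₀) - PPol V'
                = (PPol (y ::ₘ y' ::ₘ V₀)
                    - PPol (concat3 hco I Jb T' ::ₘ concat3 hco I' Jb T ::ₘ V₀))
                  + (PPol (concat3 hco I Jb T' ::ₘ concat3 hco I' Jb T ::ₘ V₀) - PPol V') := by
              ring
            rw [this]
            exact add_mem hdiff hdiff'

lemma KL (hkn : k < n) : ∀ (N : ℕ) (U V : Multiset (Fin n → S)), U.card ≤ N →
    mstat hkn U = mstat hkn V → PPol U - PPol V ∈ Ideal.span (Gens S n k) := by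
  intro N
  induction N with
  | zero =>
      intro U V hcard h
      have hU : U = 0 := Multiset.card_eq_zero.mp (by omega)
      have hV : V = 0 := eq_zero_of_mstat_eq_zero (hkn := hkn) (by
        rw [← h, hU]; simp [mstat])
      rw [hU, hV, sub_self]
      exact zero_mem _
  | succ N ih =>
      intro U V hcard h
      by_cases hU0 : U = 0
      · have hV : V = 0 := eq_zero_of_mstat_eq_zero (hkn := hkn) (by
          rw [← h, hU0]; simp [mstat])
        rw [hU0, hV, sub_self]
        exact zero_mem _
      · obtain ⟨x, hx⟩ := Multiset.exists_mem_of_ne_zero hU0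
        obtain ⟨y, hyV, hyinit⟩ := exists_init h hx
        have hagree : ∀ i : Fin n, i.1 < k → y i = x i := fun i hi =>
          congrFun hyinit ⟨i.1, hi⟩
        obtain ⟨V', hxV', hstat', hmove⟩ := moveM hx (n - k) k (by omega) le_rfl V h.symm
          ⟨y, hyV, hagree⟩
        have h2 : mstat hkn (U.erase x) = mstat hkn (V'.erase x) :=
          mstat_erase hx hxV' hstat'.symm
        have h3 := ih (U.erase x) (V'.erase x)
          (by rw [Multiset.card_erase_of_mem hx, Nat.pred_eq_sub_one]; omega) h2
        have h4 : PPol U - PPol V' = X x * (PPol (U.erase x) - PPol (V'.erase x)) := by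
          rw [mul_sub, ← PPol_cons, ← PPol_cons, Multiset.cons_erase hx,
            Multiset.cons_erase hxV']
        have h5 : PPol U - PPol V = (PPol U - PPol V') - (PPol V - PPol V') := by ring
        rw [h5]
        exact sub_mem (h4 ▸ Ideal.mul_mem_left _ _ h3) hmove

lemma Gens_subset_BSet (hkn : k < n) : Gens S n k ⊆ BSet (S := S) hkn := by
  rintro g ⟨r, hr, hrn, I, I', J, T, T', rfl⟩
  have hco : r + k + (n - (r + k)) = n := by omega
  refine ⟨concat3 hco I J T ::ₘ concat3 hco I' J T' ::ₘ 0,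
    concat3 hco I J T' ::ₘ concat3 hco I' J T ::ₘ 0, ?_, ?_⟩
  · rw [mstat_cons, mstat_cons, mstat_cons, mstat_cons]
    rw [show mstat hkn (0 : Multiset (Fin n → S)) = 0 from rfl]
    rw [← add_assoc, ← add_assoc, stat_swap hkn hr hco I I' J T T']
  · rw [PPol_cons, PPol_cons, PPol_cons, PPol_cons, PPol_zero]
    ring

/-- The kernel of `φ*` is generated by the binomials `p_{IJT} p_{I'JT'} - p_{IJT'} p_{I'JT}`. -/
theorem stmt0 (S : Type*) [Fintype S] [Nonempty S] (n k : ℕ) (hk : 1 ≤ k) (hkn : k < n) :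
    RingHom.ker (phiStar S n k hkn) =
      Ideal.span { f : MvPolynomial (Fin n → S) ℝ |
        ∃ (r : ℕ) (_ : 1 ≤ r) (_ : r + k + 1 ≤ n)
          (I I' : Fin r → S) (J : Fin k → S) (T T' : Fin (n - (r + k)) → S),
          f = X (concat3 (by omega) I J T) * X (concat3 (by omega) I' J T')
            - X (concat3 (by omega) I J T') * X (concat3 (by omega) I' J T) } := by
  show RingHom.ker (phiStar S n k hkn) = Ideal.span (Gens S n k)
  apply le_antisymm
  · refine le_trans (ker_le_span_BSet hkn) (Ideal.span_le.mpr ?_)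
    rintro b ⟨U, V, hUV, rfl⟩
    exact KL hkn U.card U V le_rfl hUV
  · refine Ideal.span_le.mpr ?_
    intro g hg
    exact BSet_subset_ker hkn (Gens_subset_BSet hkn hg)

end MSM
end

section
/- Let S be a nonempty finite set, 1 ≤ k < n integers, and F ⊆ S^{k+1} a set of forbidden transition windows. Let P_F = {x ∈ S^n : (x_{ℓ−k},…,x_ℓ) ∈ F for some ℓ with k+1 ≤ ℓ ≤ n}. Let V ⊆ ℝ^{S^n} be the image of the nonhomogeneous k-th order parametrization φ over all real parameters, and let V_F be the image of φ over those parameters satisfying a^(ℓ)(v) = 0 for all v ∈ F and all ℓ. Then V_F = V ∩ {p ∈ ℝ^{S^n} : p_x = 0 for all x ∈ P_F}. -/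
open MvPolynomial

namespace MSM

variable {S : Type*}

/-- A nonhomogeneous multistate Markov model with forbidden transitions `F` is the coordinate
slice of the unrestricted model obtained by setting to zero the coordinates of all paths
containing a forbidden window. -/
theorem stmt2 (S : Type*) [Fintype S] [Nonempty S] (n k : ℕ) (hk : 1 ≤ k) (hkn : k < n)
    (F : Set (Fin (k + 1) → S)) :
    { p : (Fin n → S) → ℝ | ∃ (pi : (Fin k → S) → ℝ)
        (a : Fin (n - k) → (Fin (k + 1) → S) → ℝ),
        (∀ ℓ : Fin (n - k), ∀ v ∈ F, a ℓ v = 0) ∧ p = phi hkn pi a }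
      = { p : (Fin n → S) → ℝ | ∃ (pi : (Fin k → S) → ℝ)
            (a : Fin (n - k) → (Fin (k + 1) → S) → ℝ), p = phi hkn pi a }
        ∩ { p : (Fin n → S) → ℝ |
            ∀ x : Fin n → S, (∃ ℓ : Fin (n - k), window hkn ℓ x ∈ F) → p x = 0 } := by
  ext p
  constructor
  · rintro ⟨pi, a, ha, rfl⟩
    refine ⟨⟨pi, a, rfl⟩, ?_⟩
    rintro x ⟨ℓ, hℓ⟩
    simp only [phi]
    rw [Finset.prod_eq_zero (Finset.mem_univ ℓ) (ha ℓ _ hℓ), mul_zero]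
  · rintro ⟨⟨pi, a, rfl⟩, hz⟩
    classical
    refine ⟨pi, fun ℓ v => if v ∈ F then 0 else a ℓ v, fun ℓ v hv => if_pos hv, ?_⟩
    funext x
    by_cases hx : ∃ ℓ : Fin (n - k), window hkn ℓ x ∈ F
    · obtain ⟨ℓ, hℓ⟩ := hx
      rw [hz x ⟨ℓ, hℓ⟩]
      simp only [phi]
      rw [Finset.prod_eq_zero (Finset.mem_univ ℓ) (by simp [hℓ]), mul_zero]
    · push_neg at hx
      simp only [phi]
      congr 1
      exact Finset.prod_congr rfl fun ℓ _ => by rw [if_neg (hx ℓ)]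


end MSM
end

section
/- Let S be a nonempty finite set, 1 ≤ k < n integers, and F ⊆ S^{k+1} a set of forbidden transition windows. Let P_F = {x ∈ S^n : (x_{ℓ−k},…,x_ℓ) ∈ F for some ℓ with k+1 ≤ ℓ ≤ n}. Let V ⊆ ℝ^{S^n} be the image of the homogeneous k-th order parametrization ψ over all real parameters, and let V_F be the image of ψ over those parameters satisfying a(v) = 0 for all v ∈ F. Then V_F = V ∩ {p ∈ ℝ^{S^n} : p_x = 0 for all x ∈ P_F}. -/
open MvPolynomial

namespace MSM

variable {S : Type*}

/-- A homogeneous multistate Markov model with forbidden transitions `F` is the coordinate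
slice of the unrestricted homogeneous model obtained by setting to zero the coordinates of all
paths containing a forbidden window. -/
theorem stmt3 (S : Type*) [Fintype S] [Nonempty S] (n k : ℕ) (hk : 1 ≤ k) (hkn : k < n)
    (F : Set (Fin (k + 1) → S)) :
    { p : (Fin n → S) → ℝ | ∃ (pi : (Fin k → S) → ℝ) (a : (Fin (k + 1) → S) → ℝ),
        (∀ v ∈ F, a v = 0) ∧ p = psi hkn pi a }
      = { p : (Fin n → S) → ℝ | ∃ (pi : (Fin k → S) → ℝ) (a : (Fin (k + 1) → S) → ℝ),
            p = psi hkn pi a }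
        ∩ { p : (Fin n → S) → ℝ |
            ∀ x : Fin n → S, (∃ ℓ : Fin (n - k), window hkn ℓ x ∈ F) → p x = 0 } := by
  classical
  ext p
  constructor
  · rintro ⟨pi, a, haF, rfl⟩
    refine ⟨⟨pi, a, rfl⟩, ?_⟩
    rintro x ⟨ℓ, hℓ⟩
    simp only [psi]
    rw [Finset.prod_eq_zero (Finset.mem_univ ℓ) (haF _ hℓ), mul_zero]
  · rintro ⟨⟨pi, a, rfl⟩, hzero⟩
    refine ⟨pi, fun v => if v ∈ F then 0 else a v, fun v hv => if_pos hv, ?_⟩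
    funext x
    by_cases hx : ∃ ℓ : Fin (n - k), window hkn ℓ x ∈ F
    · obtain ⟨ℓ, hℓ⟩ := hx
      rw [hzero x ⟨ℓ, hℓ⟩]
      symm
      simp only [psi]
      exact mul_eq_zero_of_right _ (Finset.prod_eq_zero (Finset.mem_univ ℓ) (if_pos hℓ))
    · push_neg at hx
      simp only [psi]
      congr 1
      exact Finset.prod_congr rfl fun ℓ _ => (if_neg (hx ℓ)).symm

end MSM
end

section
/- Let S be a nonempty finite set, 1 ≤ k < n integers, and F ⊆ S^{k+1} a set of forbidden transition windows. Let P_F = {x ∈ S^n : (x_{ℓ−k},…,x_ℓ) ∈ F for some ℓ with k+1 ≤ ℓ ≤ n}. Let V ⊆ ℝ^{S^n} be the image of the nonhomogeneous k-th order parametrization φ over all real parameters, and let V_F be the image of φ over those parameters with a^(ℓ)(v) = 0 for all v ∈ F and all ℓ. Then the vanishing ideal I(V_F) in ℝ[p_x : x ∈ S^n] equals the sum of the vanishing ideal I(V) and the ideal generated by the variables {p_x : x ∈ P_F}. -/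
open MvPolynomial

namespace MSM

variable {S : Type*}

lemma sub_aeval_mem {σ : Type*} (T : Set σ) [DecidablePred (· ∈ T)] (f : MvPolynomial σ ℝ) :
    f - aeval (fun x => if x ∈ T then 0 else X x) f ∈
      Ideal.span ((fun x => (X x : MvPolynomial σ ℝ)) '' T) := by
  induction f using MvPolynomial.induction_on with
  | C a => simp
  | add p q hp hq =>
      have : p + q - aeval (fun x => if x ∈ T then 0 else X x) (p + q)
          = (p - aeval (fun x => if x ∈ T then 0 else X x) p)
            + (q - aeval (fun x => if x ∈ T then 0 else X x) q) := by
        rw [map_add]; ring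
      rw [this]; exact Ideal.add_mem _ hp hq
  | mul_X p x hp =>
      rw [map_mul, aeval_X]
      by_cases hx : x ∈ T
      · have : p * X x - aeval (fun x => if x ∈ T then 0 else X x) p * (if x ∈ T then 0 else X x)
            = p * X x := by simp [hx]
        rw [this]
        exact Ideal.mul_mem_left _ p (Ideal.subset_span ⟨x, hx, rfl⟩)
      · have : p * X x - aeval (fun x => if x ∈ T then 0 else X x) p * (if x ∈ T then 0 else X x)
            = (p - aeval (fun x => if x ∈ T then 0 else X x) p) * X x := by
          simp [hx]; ring
        rw [this]
        exact Ideal.mul_mem_right _ _ hp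

lemma eval_aeval' {σ : Type*} (p : σ → ℝ) (g : σ → MvPolynomial σ ℝ) (f : MvPolynomial σ ℝ) :
    eval p (aeval g f) = eval (fun x => eval p (g x)) f := by
  rw [aeval_def, MvPolynomial.algebraMap_eq, ← eval_assoc]
  rfl

/-- The vanishing ideal of a nonhomogeneous multistate Markov model with forbidden transitions
`F` is obtained from the vanishing ideal of the unrestricted model by adding the variables
`p_x` for paths `x` containing a forbidden window. -/
theorem stmt4 (S : Type*) [Fintype S] [Nonempty S] (n k : ℕ) (hk : 1 ≤ k) (hkn : k < n)
    (F : Set (Fin (k + 1) → S)) :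
    vanishingIdeal { p : (Fin n → S) → ℝ | ∃ (pi : (Fin k → S) → ℝ)
        (a : Fin (n - k) → (Fin (k + 1) → S) → ℝ),
        (∀ ℓ : Fin (n - k), ∀ v ∈ F, a ℓ v = 0) ∧ p = phi hkn pi a }
      = vanishingIdeal { p : (Fin n → S) → ℝ | ∃ (pi : (Fin k → S) → ℝ)
            (a : Fin (n - k) → (Fin (k + 1) → S) → ℝ), p = phi hkn pi a }
        + Ideal.span ((fun x => (X x : MvPolynomial (Fin n → S) ℝ)) ''
            { x : Fin n → S | ∃ ℓ : Fin (n - k), window hkn ℓ x ∈ F }) := by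
  classical
  set T : Set (Fin n → S) := { x : Fin n → S | ∃ ℓ : Fin (n - k), window hkn ℓ x ∈ F } with hT
  set VF : Set ((Fin n → S) → ℝ) := { p | ∃ (pi : (Fin k → S) → ℝ)
        (a : Fin (n - k) → (Fin (k + 1) → S) → ℝ),
        (∀ ℓ : Fin (n - k), ∀ v ∈ F, a ℓ v = 0) ∧ p = phi hkn pi a } with hVF
  -- key: points of VF vanish on T
  have hvanish : ∀ p ∈ VF, ∀ x ∈ T, p x = 0 := by
    rintro p ⟨pi, a, ha, rfl⟩ x ⟨ℓ, hℓ⟩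
    have : ∏ ℓ' : Fin (n - k), a ℓ' (window hkn ℓ' x) = 0 :=
      Finset.prod_eq_zero (Finset.mem_univ ℓ) (ha ℓ _ hℓ)
    simp [phi, this]
  apply le_antisymm
  · -- hard direction
    intro f hf
    have hq : ∀ p : (Fin n → S) → ℝ,
        (∃ (pi : (Fin k → S) → ℝ) (a : Fin (n - k) → (Fin (k + 1) → S) → ℝ),
          p = phi hkn pi a) →
        eval p (aeval (fun x => if x ∈ T then 0 else X x) f) = 0 := by
      rintro p ⟨pi, a, rfl⟩
      rw [eval_aeval']
      set p' : (Fin n → S) → ℝ := fun x => if x ∈ T then 0 else phi hkn pi a x with hp'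
      have heq : (fun x => eval (phi hkn pi a) (if x ∈ T then 0 else X x)) = p' := by
        funext x; by_cases hx : x ∈ T <;> simp [hp', hx]
      rw [heq]
      apply hf p'
      refine ⟨pi, fun ℓ v => if v ∈ F then 0 else a ℓ v, fun ℓ v hv => by simp [hv], ?_⟩
      funext x
      show (if x ∈ T then 0 else phi hkn pi a x) = _
      by_cases hx : x ∈ T
      · obtain ⟨ℓ, hℓ⟩ := hx
        have hxT : x ∈ T := ⟨ℓ, hℓ⟩
        have hz : ∏ ℓ' : Fin (n - k),
            (if window hkn ℓ' x ∈ F then 0 else a ℓ' (window hkn ℓ' x)) = 0 :=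
          Finset.prod_eq_zero (Finset.mem_univ ℓ) (by simp [hℓ])
        rw [if_pos hxT]
        show (0 : ℝ) = pi (pathInit hkn.le x) * _
        rw [hz, mul_zero]
      · have hnF : ∀ ℓ : Fin (n - k), window hkn ℓ x ∉ F := by
          intro ℓ hℓ; exact hx ⟨ℓ, hℓ⟩
        rw [if_neg hx]
        show pi (pathInit hkn.le x) * _ = pi (pathInit hkn.le x) * _
        congr 1
        exact Finset.prod_congr rfl fun ℓ _ => (if_neg (hnF ℓ)).symm
    have hq' : aeval (fun x => if x ∈ T then 0 else X x) f ∈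
        vanishingIdeal { p : (Fin n → S) → ℝ | ∃ (pi : (Fin k → S) → ℝ)
          (a : Fin (n - k) → (Fin (k + 1) → S) → ℝ), p = phi hkn pi a } :=
      fun p hp => hq p hp
    have hsplit : f = aeval (fun x => if x ∈ T then 0 else X x) f
        + (f - aeval (fun x => if x ∈ T then 0 else X x) f) := by ring
    rw [hsplit, Ideal.add_eq_sup]
    exact Submodule.add_mem _ (Ideal.mem_sup_left hq') (Ideal.mem_sup_right (sub_aeval_mem T f))
  · rw [Ideal.add_eq_sup, sup_le_iff]
    constructor
    · intro f hf p hp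
      obtain ⟨pi, a, ha, rfl⟩ := hp
      exact hf _ ⟨pi, a, rfl⟩
    · rw [Ideal.span_le]
      rintro g ⟨x, hx, rfl⟩
      intro p hp
      simp [hvanish p hp x hx]


end MSM
end

section
/- Let S be a nonempty finite set and 1 ≤ k < n integers. Let Θ be the set of stochastic parameters for the nonhomogeneous k-th order parametrization φ, i.e., those (π, a) with π(w) ≥ 0 for all w ∈ S^k, Σ_{w ∈ S^k} π(w) = 1, and for each ℓ ∈ {k+1,…,n} and each h ∈ S^k, a^(ℓ)(h, j) ≥ 0 for all j ∈ S and Σ_{j ∈ S} a^(ℓ)(h, j) = 1. Then φ(Θ) equals the intersection of the image of φ over all real parameters with the probability simplex Δ = {p ∈ ℝ^{S^n} : p_x ≥ 0 for all x and Σ_{x ∈ S^n} p_x = 1}. -/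
open MvPolynomial

namespace MSM

variable {S : Type*}

section Helpers

variable [Fintype S] [DecidableEq S] {n k : ℕ}

def agrees (m : ℕ) (x x' : Fin n → S) : Prop := ∀ i : Fin n, i.1 < m → x' i = x i

instance (m : ℕ) (x : Fin n → S) : DecidablePred (agrees m x) := fun _ =>
  inferInstanceAs (Decidable (∀ _ : Fin n, _ → _ = _))

noncomputable def marg (p : (Fin n → S) → ℝ) (m : ℕ) (x : Fin n → S) : ℝ :=
  ∑ x' ∈ Finset.univ.filter (agrees m x), p x'

lemma marg_top (p : (Fin n → S) → ℝ) (x : Fin n → S) : marg p n x = p x := by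
  rw [marg]
  rw [show Finset.univ.filter (agrees n x) = {x} by
    ext x'
    simp only [Finset.mem_filter, Finset.mem_univ, true_and, Finset.mem_singleton, agrees]
    constructor
    · intro h; funext i; exact h i i.isLt
    · rintro rfl; intro i _; rfl]
  simp

lemma marg_nonneg {p : (Fin n → S) → ℝ} (hp : ∀ x, 0 ≤ p x) (m : ℕ) (x : Fin n → S) :
    0 ≤ marg p m x := Finset.sum_nonneg fun x' _ => hp x'

lemma marg_congr (p : (Fin n → S) → ℝ) (m : ℕ) {x y : Fin n → S}
    (h : ∀ i : Fin n, i.1 < m → y i = x i) : marg p m y = marg p m x := by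
  rw [marg, marg]
  congr 1
  ext x'
  simp only [Finset.mem_filter, Finset.mem_univ, true_and, agrees]
  constructor <;> intro hx' i hi
  · rw [hx' i hi, h i hi]
  · rw [hx' i hi, h i hi]

lemma sum_agrees_split (F : (Fin n → S) → ℝ) {m : ℕ} (hm : m < n) (x : Fin n → S) :
    ∑ x' ∈ Finset.univ.filter (agrees m x), F x'
      = ∑ j : S, ∑ x' ∈ Finset.univ.filter (agrees (m + 1) (Function.update x ⟨m, hm⟩ j)), F x' := by
  rw [← Finset.sum_fiberwise_of_maps_to (t := (Finset.univ : Finset S))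
    (g := fun x' => x' ⟨m, hm⟩) (fun _ _ => Finset.mem_univ _) F]
  refine Finset.sum_congr rfl fun j _ => ?_
  congr 1
  ext x'
  simp only [Finset.mem_filter, Finset.mem_univ, true_and, agrees]
  constructor
  · rintro ⟨h1, h2⟩ i hi
    rcases Nat.lt_or_ge i.1 m with h | h
    · rw [h1 i h, Function.update_of_ne (Fin.ne_of_val_ne (by simp; omega)) _ _]
    · have : i = ⟨m, hm⟩ := Fin.ext (show i.1 = m by omega)
      subst this
      simp [h2]
  · intro h
    constructor
    · intro i hi
      have hne : i ≠ ⟨m, hm⟩ := Fin.ne_of_val_ne (by simp; omega)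
      have := h i (by omega)
      rwa [Function.update_of_ne hne] at this
    · have := h ⟨m, hm⟩ (show m < m + 1 by omega)
      simpa using this

lemma marg_rec (p : (Fin n → S) → ℝ) {m : ℕ} (hm : m < n) (x : Fin n → S) :
    marg p m x = ∑ j : S, marg p (m + 1) (Function.update x ⟨m, hm⟩ j) :=
  sum_agrees_split p hm x


noncomputable def pref (hkn : k < n) (pi : (Fin k → S) → ℝ)
    (a : Fin (n - k) → (Fin (k + 1) → S) → ℝ) (m : ℕ) (x : Fin n → S) : ℝ :=
  pi (pathInit hkn.le x) *
    ∏ ℓ ∈ Finset.univ.filter (fun ℓ : Fin (n - k) => ℓ.1 + k < m), a ℓ (window hkn ℓ x)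

noncomputable def tail (hkn : k < n)
    (a : Fin (n - k) → (Fin (k + 1) → S) → ℝ) (m : ℕ) (x : Fin n → S) : ℝ :=
  ∑ x' ∈ Finset.univ.filter (agrees m x),
    ∏ ℓ ∈ Finset.univ.filter (fun ℓ : Fin (n - k) => ¬ ℓ.1 + k < m), a ℓ (window hkn ℓ x')

lemma marg_phi (hkn : k < n) (pi : (Fin k → S) → ℝ)
    (a : Fin (n - k) → (Fin (k + 1) → S) → ℝ) {m : ℕ} (hkm : k ≤ m) (x : Fin n → S) :
    marg (phi hkn pi a) m x = pref hkn pi a m x * tail hkn a m x := by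
  rw [marg, tail, pref, Finset.mul_sum]
  refine Finset.sum_congr rfl fun x' hx' => ?_
  simp only [Finset.mem_filter, Finset.mem_univ, true_and] at hx'
  rw [phi, ← Finset.prod_filter_mul_prod_filter_not Finset.univ
    (fun ℓ : Fin (n - k) => ℓ.1 + k < m)]
  have h1 : pathInit hkn.le x' = pathInit hkn.le x := by
    funext i
    exact hx' (Fin.castLE hkn.le i) (show i.1 < m by have := i.isLt; omega)
  have h2 : ∀ ℓ ∈ Finset.univ.filter (fun ℓ : Fin (n - k) => ℓ.1 + k < m),
      a ℓ (window hkn ℓ x') = a ℓ (window hkn ℓ x) := by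
    intro ℓ hℓ
    simp only [Finset.mem_filter, Finset.mem_univ, true_and] at hℓ
    congr 1
    funext t
    exact hx' _ (show ℓ.1 + t.1 < m by have := t.isLt; omega)
  rw [h1, Finset.prod_congr rfl h2]
  ring

lemma tail_congr (hkn : k < n) (a : Fin (n - k) → (Fin (k + 1) → S) → ℝ) (m : ℕ)
    {x y : Fin n → S} (hxy : ∀ i : Fin n, m - k ≤ i.1 → i.1 < m → y i = x i) :
    tail hkn a m y = tail hkn a m x := by
  rw [tail, tail]
  refine Finset.sum_nbij' (fun x' i => if i.1 < m then x i else x' i)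
    (fun x' i => if i.1 < m then y i else x' i) ?_ ?_ ?_ ?_ ?_
  · intro x' hx'
    simp only [Finset.mem_filter, Finset.mem_univ, true_and, agrees] at *
    intro i hi
    simp [hi]
  · intro x' hx'
    simp only [Finset.mem_filter, Finset.mem_univ, true_and, agrees] at *
    intro i hi
    simp [hi]
  · intro x' hx'
    simp only [Finset.mem_filter, Finset.mem_univ, true_and, agrees] at hx'
    funext i
    by_cases hi : i.1 < m
    · simp [hi, hx' i hi]
    · simp [hi]
  · intro x' hx'
    simp only [Finset.mem_filter, Finset.mem_univ, true_and, agrees] at hx'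
    funext i
    by_cases hi : i.1 < m
    · simp [hi, hx' i hi]
    · simp [hi]
  · intro x' hx'
    simp only [Finset.mem_filter, Finset.mem_univ, true_and, agrees] at hx'
    refine Finset.prod_congr rfl fun ℓ hℓ => ?_
    simp only [Finset.mem_filter, Finset.mem_univ, true_and, not_lt] at hℓ
    congr 1
    funext t
    show x' ⟨ℓ.1 + t.1, _⟩ = if ℓ.1 + t.1 < m then x ⟨ℓ.1 + t.1, _⟩ else x' ⟨ℓ.1 + t.1, _⟩
    by_cases hi : ℓ.1 + t.1 < m
    · rw [if_pos hi, hx' _ hi, hxy _ (show m - k ≤ ℓ.1 + t.1 by omega) hi]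
    · rw [if_neg hi]


lemma filter_agrees_top (x : Fin n → S) :
    Finset.univ.filter (agrees n x) = {x} := by
  ext x'
  simp only [Finset.mem_filter, Finset.mem_univ, true_and, Finset.mem_singleton, agrees]
  constructor
  · intro h; funext i; exact h i i.isLt
  · rintro rfl i _; rfl

lemma filter_not_split {m : ℕ} (hkm : k ≤ m) (hm : m < n) (hkn : k < n) :
    Finset.univ.filter (fun ℓ : Fin (n - k) => ¬ ℓ.1 + k < m)
      = insert ⟨m - k, by omega⟩
          (Finset.univ.filter (fun ℓ : Fin (n - k) => ¬ ℓ.1 + k < m + 1)) := by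
  ext ℓ
  simp only [Finset.mem_filter, Finset.mem_univ, true_and, Finset.mem_insert, not_lt,
    Fin.ext_iff]
  constructor
  · intro h
    rcases Nat.eq_or_lt_of_le h with h' | h'
    · left; omega
    · right; omega
  · rintro (h | h) <;> omega

lemma filter_lt_split {m : ℕ} (hkm : k ≤ m) (hm : m < n) (hkn : k < n) :
    Finset.univ.filter (fun ℓ : Fin (n - k) => ℓ.1 + k < m + 1)
      = insert ⟨m - k, by omega⟩
          (Finset.univ.filter (fun ℓ : Fin (n - k) => ℓ.1 + k < m)) := by
  ext ℓ
  simp only [Finset.mem_filter, Finset.mem_univ, true_and, Finset.mem_insert, Fin.ext_iff]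
  omega

lemma window_update_eq (hkn : k < n) (ℓ : Fin (n - k)) {m : ℕ} (hm : m < n)
    (hℓ : ℓ.1 + k < m) (x : Fin n → S) (j : S) :
    window hkn ℓ (Function.update x ⟨m, hm⟩ j) = window hkn ℓ x := by
  funext t
  show Function.update x ⟨m, hm⟩ j ⟨ℓ.1 + t.1, _⟩ = _
  rw [Function.update_of_ne (Fin.ne_of_val_ne (show ℓ.1 + t.1 ≠ m by have := t.isLt; omega))]
  rfl

lemma window_update_snoc (hkn : k < n) {m : ℕ} (hkm : k ≤ m) (hm : m < n)
    (x : Fin n → S) (j : S) :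
    window hkn ⟨m - k, by omega⟩ (Function.update x ⟨m, hm⟩ j)
      = Fin.snoc (fun t : Fin k => x ⟨m - k + t.1, by have := t.isLt; omega⟩) j := by
  funext t
  refine Fin.lastCases ?_ (fun s => ?_) t
  · show Function.update x ⟨m, hm⟩ j ⟨m - k + k, _⟩ = _
    rw [show (⟨m - k + k, by omega⟩ : Fin n) = ⟨m, hm⟩ from Fin.ext (by simp; omega)]
    simp
  · show Function.update x ⟨m, hm⟩ j ⟨m - k + s.1, _⟩ = _
    rw [Function.update_of_ne (Fin.ne_of_val_ne (show m - k + s.1 ≠ m by have := s.isLt; omega))]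
    simp [Fin.snoc_castSucc]

lemma tail_one (hkn : k < n) (a : Fin (n - k) → (Fin (k + 1) → S) → ℝ)
    (ha : ∀ (ℓ : Fin (n - k)) (h : Fin k → S), (∑ j : S, a ℓ (Fin.snoc h j)) = 1) :
    ∀ (d m : ℕ), n - m = d → k ≤ m → m ≤ n → ∀ x : Fin n → S, tail hkn a m x = 1 := by
  intro d
  induction d with
  | zero =>
    intro m hd hkm hmn x
    have hmn' : m = n := by omega
    subst hmn'
    rw [tail, filter_agrees_top]
    rw [Finset.sum_singleton]
    rw [Finset.filter_false_of_mem, Finset.prod_empty]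
    intro ℓ _
    simp only [not_not, not_lt]
    have := ℓ.isLt; omega
  | succ d ih =>
    intro m hd hkm hmn x
    have hm : m < n := by omega
    rw [tail, sum_agrees_split _ hm x]
    have hstep : ∀ j : S,
        (∑ x' ∈ Finset.univ.filter (agrees (m + 1) (Function.update x ⟨m, hm⟩ j)),
          ∏ ℓ ∈ Finset.univ.filter (fun ℓ : Fin (n - k) => ¬ ℓ.1 + k < m),
            a ℓ (window hkn ℓ x'))
        = a ⟨m - k, by omega⟩ (window hkn ⟨m - k, by omega⟩ (Function.update x ⟨m, hm⟩ j)) := by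
      intro j
      have : ∀ x' ∈ Finset.univ.filter (agrees (m + 1) (Function.update x ⟨m, hm⟩ j)),
          (∏ ℓ ∈ Finset.univ.filter (fun ℓ : Fin (n - k) => ¬ ℓ.1 + k < m),
            a ℓ (window hkn ℓ x'))
          = a ⟨m - k, by omega⟩ (window hkn ⟨m - k, by omega⟩ (Function.update x ⟨m, hm⟩ j))
            * ∏ ℓ ∈ Finset.univ.filter (fun ℓ : Fin (n - k) => ¬ ℓ.1 + k < m + 1),
                a ℓ (window hkn ℓ x') := by
        intro x' hx'
        simp only [Finset.mem_filter, Finset.mem_univ, true_and, agrees] at hx'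
        rw [filter_not_split hkm hm hkn, Finset.prod_insert (by
          simp only [Finset.mem_filter, Finset.mem_univ, true_and, not_lt, not_le]
          omega)]
        congr 2
        funext t
        exact hx' _ (show m - k + t.1 < m + 1 by have := t.isLt; omega)
      rw [Finset.sum_congr rfl this, ← Finset.mul_sum]
      have htail : tail hkn a (m + 1) (Function.update x ⟨m, hm⟩ j) = 1 :=
        ih (m + 1) (by omega) (by omega) (by omega) _
      rw [tail] at htail
      rw [htail, mul_one]
    rw [Finset.sum_congr rfl fun j _ => hstep j]
    have : ∀ j : S,
        a ⟨m - k, by omega⟩ (window hkn ⟨m - k, by omega⟩ (Function.update x ⟨m, hm⟩ j))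
        = a ⟨m - k, by omega⟩
            (Fin.snoc (fun t : Fin k => x ⟨m - k + t.1, by have := t.isLt; omega⟩) j) := by
      intro j
      rw [window_update_snoc hkn hkm hm x j]
    rw [Finset.sum_congr rfl fun j _ => this j]
    exact ha _ _

lemma pref_update (hkn : k < n) (pi : (Fin k → S) → ℝ)
    (a : Fin (n - k) → (Fin (k + 1) → S) → ℝ) {m : ℕ} (hkm : k ≤ m) (hm : m < n)
    (x : Fin n → S) (j : S) :
    pref hkn pi a (m + 1) (Function.update x ⟨m, hm⟩ j)
      = pref hkn pi a m x
        * a ⟨m - k, by omega⟩ (window hkn ⟨m - k, by omega⟩ (Function.update x ⟨m, hm⟩ j)) := by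
  rw [pref, pref, filter_lt_split hkm hm hkn, Finset.prod_insert (by
    simp only [Finset.mem_filter, Finset.mem_univ, true_and, not_lt]
    omega)]
  have h1 : pathInit hkn.le (Function.update x ⟨m, hm⟩ j) = pathInit hkn.le x := by
    funext i
    show Function.update x ⟨m, hm⟩ j (Fin.castLE hkn.le i) = x _
    rw [Function.update_of_ne (Fin.ne_of_val_ne (show i.1 ≠ m by have := i.isLt; omega))]
  have h2 : ∀ ℓ ∈ Finset.univ.filter (fun ℓ : Fin (n - k) => ℓ.1 + k < m),
      a ℓ (window hkn ℓ (Function.update x ⟨m, hm⟩ j)) = a ℓ (window hkn ℓ x) := by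
    intro ℓ hℓ
    simp only [Finset.mem_filter, Finset.mem_univ, true_and] at hℓ
    rw [window_update_eq hkn ℓ hm hℓ x j]
  rw [h1, Finset.prod_congr rfl h2]
  ring

lemma cross (hkn : k < n) (pi : (Fin k → S) → ℝ)
    (a : Fin (n - k) → (Fin (k + 1) → S) → ℝ) {m : ℕ} (hkm : k ≤ m) (hm : m < n)
    (x y : Fin n → S) (j : S)
    (hxy : ∀ i : Fin n, m - k ≤ i.1 → i.1 < m → y i = x i) :
    marg (phi hkn pi a) (m + 1) (Function.update x ⟨m, hm⟩ j) * marg (phi hkn pi a) m y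
      = marg (phi hkn pi a) (m + 1) (Function.update y ⟨m, hm⟩ j)
        * marg (phi hkn pi a) m x := by
  rw [marg_phi hkn pi a (show k ≤ m + 1 by omega), marg_phi hkn pi a hkm,
      marg_phi hkn pi a (show k ≤ m + 1 by omega), marg_phi hkn pi a hkm,
      pref_update hkn pi a hkm hm x j, pref_update hkn pi a hkm hm y j]
  have hupd : ∀ i : Fin n, m + 1 - k ≤ i.1 → i.1 < m + 1 →
      Function.update y ⟨m, hm⟩ j i = Function.update x ⟨m, hm⟩ j i := by
    intro i h1 h2
    by_cases hi : i = ⟨m, hm⟩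
    · subst hi; simp
    · rw [Function.update_of_ne hi, Function.update_of_ne hi]
      exact hxy i (by omega) (by
        rcases Nat.lt_or_ge i.1 m with h | h
        · exact h
        · exact absurd (Fin.ext (show i.1 = m by omega)) hi)
  have hw : window hkn ⟨m - k, by omega⟩ (Function.update y ⟨m, hm⟩ j)
      = window hkn ⟨m - k, by omega⟩ (Function.update x ⟨m, hm⟩ j) := by
    funext t
    show Function.update y ⟨m, hm⟩ j ⟨m - k + t.1, _⟩ = Function.update x ⟨m, hm⟩ j ⟨m - k + t.1, _⟩
    by_cases hi : (⟨m - k + t.1, by have := t.isLt; omega⟩ : Fin n) = ⟨m, hm⟩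
    · rw [hi]; simp
    · rw [Function.update_of_ne hi, Function.update_of_ne hi]
      have htm : m - k + t.1 < m := by
        rcases Nat.lt_or_ge (m - k + t.1) m with h | h
        · exact h
        · exact absurd (Fin.ext (show m - k + t.1 = m by have := t.isLt; omega)) hi
      exact hxy _ (Nat.le_add_right _ _) htm
  have ht1 : tail hkn a (m + 1) (Function.update y ⟨m, hm⟩ j)
      = tail hkn a (m + 1) (Function.update x ⟨m, hm⟩ j) := tail_congr hkn a (m + 1) hupd
  have ht0 : tail hkn a m y = tail hkn a m x := tail_congr hkn a m hxy
  rw [hw, ht1, ht0]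
  ring

open Classical in
/-- The conditional-probability parameter extracted from `p`. -/
noncomputable def condA (p : (Fin n → S) → ℝ) (ℓ : Fin (n - k)) (h : Fin k → S) (j : S) : ℝ :=
  if H : ∃ x' : Fin n → S,
      (∀ t : Fin k, x' ⟨ℓ.1 + t.1, by have := ℓ.isLt; have := t.isLt; omega⟩ = h t)
        ∧ marg p (ℓ.1 + k) x' ≠ 0 then
    marg p (ℓ.1 + k + 1)
        (Function.update H.choose ⟨ℓ.1 + k, by have := ℓ.isLt; omega⟩ j)
      / marg p (ℓ.1 + k) H.choose
  else (Fintype.card S : ℝ)⁻¹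

lemma condA_nonneg {p : (Fin n → S) → ℝ} (hp : ∀ x, 0 ≤ p x)
    (ℓ : Fin (n - k)) (h : Fin k → S) (j : S) : 0 ≤ condA p ℓ h j := by
  rw [condA]
  split_ifs with H
  · exact div_nonneg (marg_nonneg hp _ _) (marg_nonneg hp _ _)
  · simp

lemma condA_sum [Nonempty S] (p : (Fin n → S) → ℝ) (ℓ : Fin (n - k)) (h : Fin k → S) :
    ∑ j : S, condA p ℓ h j = 1 := by
  by_cases H : ∃ x' : Fin n → S,
      (∀ t : Fin k, x' ⟨ℓ.1 + t.1, by have := ℓ.isLt; have := t.isLt; omega⟩ = h t)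
        ∧ marg p (ℓ.1 + k) x' ≠ 0
  · simp only [condA, dif_pos H]
    rw [← Finset.sum_div]
    rw [← marg_rec p (show ℓ.1 + k < n by have := ℓ.isLt; omega) H.choose]
    exact div_self H.choose_spec.2
  · simp only [condA, dif_neg H]
    rw [Finset.sum_const, Finset.card_univ, nsmul_eq_mul]
    exact mul_inv_cancel₀ (Nat.cast_ne_zero.2 Fintype.card_ne_zero)

lemma eq_on_window {ℓ : Fin (n - k)} {h : Fin k → S} {u v : Fin n → S}
    (hu : ∀ t : Fin k, u ⟨ℓ.1 + t.1, by have := ℓ.isLt; have := t.isLt; omega⟩ = h t)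
    (hv : ∀ t : Fin k, v ⟨ℓ.1 + t.1, by have := ℓ.isLt; have := t.isLt; omega⟩ = h t)
    (i : Fin n) (h1 : ℓ.1 ≤ i.1) (h2 : i.1 < ℓ.1 + k) : u i = v i := by
  have ht : i.1 - ℓ.1 < k := by omega
  have e1 := hu ⟨i.1 - ℓ.1, ht⟩
  have e2 := hv ⟨i.1 - ℓ.1, ht⟩
  have h4 : (⟨ℓ.1 + (⟨i.1 - ℓ.1, ht⟩ : Fin k).1,
      by have := ℓ.isLt; omega⟩ : Fin n) = i := Fin.ext (by simp; omega)
  rw [h4] at e1 e2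
  exact e1.trans e2.symm

lemma pathInit_ext (hkn' : k ≤ n) (h : Fin k → S) (s₀ : S) :
    pathInit hkn' (fun i : Fin n => if hi : i.1 < k then h ⟨i.1, hi⟩ else s₀) = h := by
  funext i
  show (if hi : (Fin.castLE hkn' i).1 < k then h ⟨(Fin.castLE hkn' i).1, hi⟩ else s₀) = h i
  rw [dif_pos (show (Fin.castLE hkn' i).1 < k from i.isLt)]
  exact congrArg h (Fin.ext rfl)

lemma condA_spec (hkn : k < n) (pi : (Fin k → S) → ℝ)
    (a : Fin (n - k) → (Fin (k + 1) → S) → ℝ) (ℓ : Fin (n - k)) {m : ℕ} (hm : m < n)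
    (hmk : ℓ.1 + k = m) (h : Fin k → S) (j : S) (x : Fin n → S)
    (hx : ∀ t : Fin k, x ⟨ℓ.1 + t.1, by have := ℓ.isLt; have := t.isLt; omega⟩ = h t)
    (hz : marg (phi hkn pi a) m x ≠ 0) :
    marg (phi hkn pi a) m x * condA (phi hkn pi a) ℓ h j
      = marg (phi hkn pi a) (m + 1) (Function.update x ⟨m, hm⟩ j) := by
  subst hmk
  have H : ∃ x' : Fin n → S,
      (∀ t : Fin k, x' ⟨ℓ.1 + t.1, by have := ℓ.isLt; have := t.isLt; omega⟩ = h t)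
        ∧ marg (phi hkn pi a) (ℓ.1 + k) x' ≠ 0 := ⟨x, hx, hz⟩
  rw [condA, dif_pos H]
  obtain ⟨hch, hchz⟩ := H.choose_spec
  have hxy : ∀ i : Fin n, ℓ.1 + k - k ≤ i.1 → i.1 < ℓ.1 + k → H.choose i = x i := by
    intro i h1 h2
    exact eq_on_window hch hx i (by omega) h2
  have hcross := cross hkn pi a (Nat.le_add_left k ℓ.1) hm x H.choose j hxy
  rw [mul_div_assoc', div_eq_iff hchz, mul_comm]
  exact hcross.symm

lemma reconstruct (hkn : k < n) (pi : (Fin k → S) → ℝ)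
    (a : Fin (n - k) → (Fin (k + 1) → S) → ℝ) (hp : ∀ x, 0 ≤ phi hkn pi a x) :
    ∀ m, k ≤ m → m ≤ n → ∀ x : Fin n → S, marg (phi hkn pi a) m x
      = marg (phi hkn pi a) k x
        * ∏ ℓ ∈ Finset.univ.filter (fun ℓ : Fin (n - k) => ℓ.1 + k < m),
            condA (phi hkn pi a) ℓ (Fin.init (window hkn ℓ x))
              (window hkn ℓ x (Fin.last k)) := by
  refine Nat.le_induction ?_ ?_
  · intro _ x
    rw [Finset.filter_false_of_mem (fun ℓ _ => by omega), Finset.prod_empty, mul_one]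
  · intro m hkm IH hmn x
    have hm : m < n := by omega
    have IH' := IH (by omega) x
    rw [filter_lt_split hkm hm hkn, Finset.prod_insert (by
      simp only [Finset.mem_filter, Finset.mem_univ, true_and, not_lt]
      omega)]
    rw [mul_left_comm, ← IH']
    have hj : window hkn ⟨m - k, by omega⟩ x (Fin.last k) = x ⟨m, hm⟩ := by
      show x ⟨m - k + k, _⟩ = x ⟨m, hm⟩
      congr 1
      exact Fin.ext (by simp; omega)
    rw [hj]
    by_cases hz : marg (phi hkn pi a) m x = 0
    · rw [hz, mul_zero]
      have hrec := marg_rec (phi hkn pi a) hm x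
      rw [hz] at hrec
      have hall := (Finset.sum_eq_zero_iff_of_nonneg
        (fun j _ => marg_nonneg hp (m + 1) _)).1 hrec.symm
      have := hall (x ⟨m, hm⟩) (Finset.mem_univ _)
      rwa [Function.update_eq_self] at this
    · have hmatch : ∀ t : Fin k,
          x ⟨(⟨m - k, by omega⟩ : Fin (n - k)).1 + t.1, by have := t.isLt; omega⟩
            = Fin.init (window hkn ⟨m - k, by omega⟩ x) t := fun t => rfl
      have hspec := condA_spec hkn pi a ⟨m - k, by omega⟩ hm (by simp; omega)
        (Fin.init (window hkn ⟨m - k, by omega⟩ x)) (x ⟨m, hm⟩) x hmatch hz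
      rw [mul_comm, hspec, Function.update_eq_self]

lemma filter_pathInit (hkn' : k ≤ n) (h : Fin k → S) (s₀ : S) :
    Finset.univ.filter (fun x' : Fin n → S => pathInit hkn' x' = h)
      = Finset.univ.filter
          (agrees k (fun i : Fin n => if hi : i.1 < k then h ⟨i.1, hi⟩ else s₀)) := by
  ext x'
  simp only [Finset.mem_filter, Finset.mem_univ, true_and, agrees]
  constructor
  · intro hpi i hi
    rw [dif_pos hi, ← hpi]
    exact congrArg x' (Fin.ext rfl)
  · intro hx'
    funext i
    have h1 : (Fin.castLE hkn' i).1 < k := i.isLt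
    have e := hx' (Fin.castLE hkn' i) h1
    show x' (Fin.castLE hkn' i) = h i
    rw [e, dif_pos h1]
    exact congrArg h (Fin.ext rfl)

lemma sum_phi (hkn : k < n) [Nonempty S] (pi : (Fin k → S) → ℝ)
    (a : Fin (n - k) → (Fin (k + 1) → S) → ℝ)
    (ha : ∀ (ℓ : Fin (n - k)) (h : Fin k → S), (∑ j : S, a ℓ (Fin.snoc h j)) = 1) :
    (∑ x : Fin n → S, phi hkn pi a x) = ∑ h : Fin k → S, pi h := by
  rw [← Finset.sum_fiberwise_of_maps_to (t := (Finset.univ : Finset (Fin k → S)))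
    (g := pathInit hkn.le) (fun _ _ => Finset.mem_univ _) (phi hkn pi a)]
  refine Finset.sum_congr rfl fun h _ => ?_
  rw [filter_pathInit hkn.le h (Classical.arbitrary S)]
  have hfact := marg_phi hkn pi a (le_refl k)
    (fun i : Fin n => if hi : i.1 < k then h ⟨i.1, hi⟩ else Classical.arbitrary S)
  rw [marg] at hfact
  rw [hfact, pref, Finset.filter_false_of_mem (fun ℓ _ => by omega), Finset.prod_empty,
    mul_one, tail_one hkn a ha (n - k) k rfl (le_refl k) hkn.le _, mul_one,
    pathInit_ext hkn.le h (Classical.arbitrary S)]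

end Helpers

/-- The image of the stochastic parameter space under the nonhomogeneous parametrization equals
the intersection of the image over all real parameters with the probability simplex. -/
theorem stmt5 (S : Type*) [Fintype S] [Nonempty S] (n k : ℕ) (hk : 1 ≤ k) (hkn : k < n) :
    { p : (Fin n → S) → ℝ | ∃ (pi : (Fin k → S) → ℝ)
        (a : Fin (n - k) → (Fin (k + 1) → S) → ℝ),
        (∀ w, 0 ≤ pi w) ∧ (∑ w : Fin k → S, pi w) = 1 ∧
        (∀ (ℓ : Fin (n - k)) (h : Fin k → S),
          (∀ j : S, 0 ≤ a ℓ (Fin.snoc h j)) ∧ (∑ j : S, a ℓ (Fin.snoc h j)) = 1) ∧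
        p = phi hkn pi a }
      = { p : (Fin n → S) → ℝ | ∃ (pi : (Fin k → S) → ℝ)
            (a : Fin (n - k) → (Fin (k + 1) → S) → ℝ), p = phi hkn pi a }
        ∩ { p : (Fin n → S) → ℝ |
            (∀ x, 0 ≤ p x) ∧ (∑ x : Fin n → S, p x) = 1 } := by
  classical
  ext p
  simp only [Set.mem_setOf_eq, Set.mem_inter_iff]
  constructor
  · rintro ⟨pi, a, hpi0, hpi1, ha, rfl⟩
    refine ⟨⟨pi, a, rfl⟩, ?_, ?_⟩
    · intro x
      refine mul_nonneg (hpi0 _) (Finset.prod_nonneg fun ℓ _ => ?_)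
      have h0 := (ha ℓ (Fin.init (window hkn ℓ x))).1 (window hkn ℓ x (Fin.last k))
      rwa [Fin.snoc_init_self] at h0
    · rw [sum_phi hkn pi a (fun ℓ h => (ha ℓ h).2)]
      exact hpi1
  · rintro ⟨⟨pi, a, rfl⟩, hpos, hsum⟩
    refine ⟨fun h => marg (phi hkn pi a) k
        (fun i : Fin n => if hi : i.1 < k then h ⟨i.1, hi⟩ else Classical.arbitrary S),
      fun ℓ w => condA (phi hkn pi a) ℓ (Fin.init w) (w (Fin.last k)), ?_, ?_, ?_, ?_⟩
    · intro w
      exact marg_nonneg hpos _ _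
    · have e1 : ∀ h : Fin k → S, marg (phi hkn pi a) k
          (fun i : Fin n => if hi : i.1 < k then h ⟨i.1, hi⟩ else Classical.arbitrary S)
          = ∑ x ∈ Finset.univ.filter (fun x : Fin n → S => pathInit hkn.le x = h),
              phi hkn pi a x := by
        intro h
        rw [filter_pathInit hkn.le h (Classical.arbitrary S)]
        rfl
      rw [Finset.sum_congr rfl fun h _ => e1 h,
        Finset.sum_fiberwise_of_maps_to (fun _ _ => Finset.mem_univ _) (phi hkn pi a)]
      exact hsum
    · intro ℓ h
      constructor
      · intro j
        exact condA_nonneg hpos _ _ _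
      · have e2 : ∀ j : S, condA (phi hkn pi a) ℓ (Fin.init (Fin.snoc h j : Fin (k + 1) → S))
            ((Fin.snoc h j : Fin (k + 1) → S) (Fin.last k)) = condA (phi hkn pi a) ℓ h j := by
          intro j
          rw [Fin.init_snoc, Fin.snoc_last]
        rw [Finset.sum_congr rfl fun j _ => e2 j]
        exact condA_sum _ _ _
    · funext x
      have hrec := reconstruct hkn pi a hpos n hkn.le le_rfl x
      rw [marg_top] at hrec
      rw [hrec]
      simp only [phi]
      congr 1
      · refine (marg_congr _ k fun i hi => ?_).symm
        rw [dif_pos hi]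
        exact congrArg x (Fin.ext rfl)
      · rw [Finset.filter_true_of_mem (fun ℓ _ => by have := ℓ.isLt; omega)]


end MSM
end

section
/- Let S be a nonempty finite set and 1 ≤ k < n integers. The intersection of the image of the nonhomogeneous k-th order parametrization φ over all real parameters with the probability simplex Δ equals the hierarchical model with facet parameters on consecutive windows; that is, it equals the set of p ∈ ℝ^{S^n} for which there exist nonnegative functions θ^(ℓ) : S^{k+1} → ℝ (ℓ = k+1,…,n) such that Z := Σ_{y ∈ S^n} ∏_{ℓ=k+1}^n θ^(ℓ)(y_{ℓ−k},…,y_ℓ) > 0 and p_x = (1/Z)·∏_{ℓ=k+1}^n θ^(ℓ)(x_{ℓ−k},…,x_ℓ) for every path x ∈ S^n. -/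
open MvPolynomial

namespace MSM

variable {S : Type*}

/-- The intersection of the image of the nonhomogeneous parametrization with the probability
simplex equals the hierarchical model whose facets are the consecutive windows. -/
theorem stmt7 (S : Type*) [Fintype S] [Nonempty S] (n k : ℕ) (hk : 1 ≤ k) (hkn : k < n) :
    { p : (Fin n → S) → ℝ | ∃ (pi : (Fin k → S) → ℝ)
          (a : Fin (n - k) → (Fin (k + 1) → S) → ℝ), p = phi hkn pi a }
        ∩ { p : (Fin n → S) → ℝ | (∀ x, 0 ≤ p x) ∧ (∑ x : Fin n → S, p x) = 1 }
      = { p : (Fin n → S) → ℝ | ∃ θ : Fin (n - k) → (Fin (k + 1) → S) → ℝ,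
          (∀ ℓ v, 0 ≤ θ ℓ v) ∧
          0 < (∑ y : Fin n → S, ∏ ℓ : Fin (n - k), θ ℓ (window hkn ℓ y)) ∧
          ∀ x : Fin n → S, p x = (∏ ℓ : Fin (n - k), θ ℓ (window hkn ℓ x)) /
            (∑ y : Fin n → S, ∏ ℓ : Fin (n - k), θ ℓ (window hkn ℓ y)) } := by
  haveI : NeZero (n - k) := ⟨by omega⟩
  ext p
  simp only [Set.mem_inter_iff, Set.mem_setOf_eq]
  constructor
  · rintro ⟨⟨pi, a, rfl⟩, hnn, hsum⟩
    refine ⟨fun ℓ v => (if ℓ = 0 then |pi (fun i => v i.castSucc)| else 1) * |a ℓ v|,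
      fun ℓ v => mul_nonneg (by split_ifs <;> simp [abs_nonneg]) (abs_nonneg _), ?_, ?_⟩
    all_goals
      have key : ∀ x : Fin n → S,
          (∏ ℓ : Fin (n - k),
            (if ℓ = 0 then |pi (fun i => (window hkn ℓ x) i.castSucc)| else 1) *
              |a ℓ (window hkn ℓ x)|) = phi hkn pi a x := by
        intro x
        rw [Finset.prod_mul_distrib]
        have h1 : (∏ ℓ : Fin (n - k),
            (if ℓ = 0 then |pi (fun i => (window hkn ℓ x) i.castSucc)| else 1))
            = |pi (pathInit hkn.le x)| := by
          rw [Finset.prod_ite_eq' Finset.univ (0 : Fin (n - k))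
            (fun ℓ => |pi (fun i => (window hkn ℓ x) i.castSucc)|)]
          simp only [Finset.mem_univ, if_true]
          have he : (fun i => (window hkn 0 x) i.castSucc) = pathInit hkn.le x := by
            funext i
            show x _ = x _
            congr 1
            exact Fin.ext (by simp [Fin.val_zero])
          rw [he]
        rw [h1, ← Finset.abs_prod, ← abs_mul]
        exact abs_of_nonneg (hnn x)
    · simp only [key]
      rw [hsum]; norm_num
    · intro x
      simp only [key]
      rw [hsum, div_one]
  · rintro ⟨θ, hθ, hZ, hp⟩
    refine ⟨⟨fun _ => (∑ y : Fin n → S, ∏ ℓ : Fin (n - k), θ ℓ (window hkn ℓ y))⁻¹, θ, ?_⟩,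
      fun x => ?_, ?_⟩
    · funext x
      rw [hp x, phi, div_eq_mul_inv, mul_comm]
    · rw [hp x]
      exact div_nonneg (Finset.prod_nonneg fun ℓ _ => hθ ℓ _) hZ.le
    · have : ∀ x : Fin n → S, p x = (∏ ℓ : Fin (n - k), θ ℓ (window hkn ℓ x)) /
          (∑ y : Fin n → S, ∏ ℓ : Fin (n - k), θ ℓ (window hkn ℓ y)) := hp
      simp only [this]
      rw [← Finset.sum_div, div_self hZ.ne']


end MSM
end

section
/- Let S be a nonempty finite set and 1 ≤ k < n integers. Let x, y ∈ S^n be paths and let r, s be positions with k+1 ≤ r ≤ n−k and k+1 ≤ s ≤ n−k such that x_{r+t} = y_{s+t} for every t with −k ≤ t ≤ k. Let η ∈ S, and let x' (resp. y') be the path obtained from x (resp. y) by replacing the entry at position r (resp. s) with η. Then for every choice of homogeneous parameters π : S^k → ℝ and a : S^{k+1} → ℝ, the coordinates of the parametrized point p = ψ(π, a) satisfy p_x · p_{y'} = p_{x'} · p_y. -/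
open MvPolynomial

namespace MSM

variable {S : Type*}

/-- Split the product over all windows into the `k+1` windows containing position `r`
and the rest. -/
private lemma prod_split {n k r : ℕ} (hr1 : k ≤ r) (hrn : r < n - k) (f : Fin (n - k) → ℝ) :
    ∏ ℓ, f ℓ = (∏ j : Fin (k + 1), f ⟨r - k + j.1, by have := j.isLt; omega⟩) *
      ∏ ℓ ∈ (Finset.univ.filter
        (fun ℓ : Fin (n - k) => r - k ≤ ℓ.1 ∧ ℓ.1 ≤ r))ᶜ, f ℓ := by
  rw [← Finset.prod_mul_prod_compl
    (Finset.univ.filter (fun ℓ : Fin (n - k) => r - k ≤ ℓ.1 ∧ ℓ.1 ≤ r)) f]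
  congr 1
  refine (Finset.prod_nbij' (fun ℓ => (⟨min (ℓ.1 - (r - k)) k, by omega⟩ : Fin (k + 1)))
    (fun j => (⟨r - k + j.1, by have := j.isLt; omega⟩ : Fin (n - k)))
    ?_ ?_ ?_ ?_ ?_)
  · intro ℓ hℓ; exact Finset.mem_univ _
  · intro j _; simp only [Finset.mem_filter, Finset.mem_univ, true_and]
    have := j.isLt; omega
  · intro ℓ hℓ; simp only [Finset.mem_filter, Finset.mem_univ, true_and] at hℓ
    ext; (try simp only [Fin.val_mk]); omega
  · intro j _; ext; (try simp only [Fin.val_mk]); omega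
  · intro ℓ hℓ; simp only [Finset.mem_filter, Finset.mem_univ, true_and] at hℓ
    congr 1; ext; (try simp only [Fin.val_mk]); omega

set_option maxHeartbeats 1000000 in
/-- Binomial relations induced by time-homogeneity: if the paths `x` and `y` agree on the
windows of radius `k` around the interior positions `r` and `s` respectively, then swapping
the middle entry for `η` at those positions yields equal cross-products of path coordinates,
for every choice of homogeneous parameters. (Positions are 0-indexed: the 1-indexed condition
`k+1 ≤ r ≤ n-k` becomes `k ≤ r` and `r + k < n`.) -/
theorem stmt8 (S : Type*) [Fintype S] [Nonempty S] (n k : ℕ) (hk : 1 ≤ k) (hkn : k < n)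
    (x y : Fin n → S) (r s : ℕ)
    (hr1 : k ≤ r) (hr2 : r + k < n) (hs1 : k ≤ s) (hs2 : s + k < n)
    (hagree : ∀ t : Fin (2 * k + 1),
      x ⟨r - k + t.1, by have := t.isLt; omega⟩ = y ⟨s - k + t.1, by have := t.isLt; omega⟩)
    (η : S) (pi : (Fin k → S) → ℝ) (a : (Fin (k + 1) → S) → ℝ) :
    psi hkn pi a x * psi hkn pi a (Function.update y ⟨s, by omega⟩ η)
      = psi hkn pi a (Function.update x ⟨r, by omega⟩ η) * psi hkn pi a y := by
  classical
  have hrn : r < n - k := by omega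
  have hsn : s < n - k := by omega
  set r' : Fin n := ⟨r, by omega⟩ with hr'
  set s' : Fin n := ⟨s, by omega⟩ with hs'
  -- the initial segment is unaffected by the update
  have hinit : ∀ (z : Fin n → S) (m : Fin n), k ≤ m.1 →
      pathInit hkn.le (Function.update z m η) = pathInit hkn.le z := by
    intro z m hm
    funext i
    simp only [pathInit]
    rw [Function.update_of_ne]
    intro h
    have : (Fin.castLE hkn.le i).1 = m.1 := congrArg Fin.val h
    simp only [Fin.coe_castLE] at this
    have := i.isLt; omega
  -- windows not containing the updated position are unaffected
  have hwin : ∀ (z : Fin n → S) (m : Fin n) (ℓ : Fin (n - k)),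
      (ℓ.1 + k < m.1 ∨ m.1 < ℓ.1) →
      window hkn ℓ (Function.update z m η) = window hkn ℓ z := by
    intro z m ℓ hℓ
    funext t
    simp only [window]
    rw [Function.update_of_ne]
    intro h
    have : ℓ.1 + t.1 = m.1 := congrArg Fin.val h
    have := t.isLt; omega
  -- windows of x around r agree with windows of y around s
  have key : ∀ j : Fin (k + 1),
      window hkn ⟨r - k + j.1, by have := j.isLt; omega⟩ x
        = window hkn ⟨s - k + j.1, by have := j.isLt; omega⟩ y := by
    intro j
    funext t
    have h := hagree ⟨j.1 + t.1, by have := j.isLt; have := t.isLt; omega⟩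
    simp only [window]
    convert h using 2 <;> (ext; (try simp only [Fin.val_mk]); omega)
  -- same for the updated paths
  have key' : ∀ j : Fin (k + 1),
      window hkn ⟨r - k + j.1, by have := j.isLt; omega⟩ (Function.update x r' η)
        = window hkn ⟨s - k + j.1, by have := j.isLt; omega⟩ (Function.update y s' η) := by
    intro j
    funext t
    simp only [window]
    by_cases hjt : j.1 + t.1 = k
    · have h1 : (⟨r - k + j.1 + t.1, by have := j.isLt; have := t.isLt; omega⟩ : Fin n) = r' := by
        ext; show r - k + j.1 + t.1 = r; omega
      have h2 : (⟨s - k + j.1 + t.1, by have := j.isLt; have := t.isLt; omega⟩ : Fin n) = s' := by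
        ext; show s - k + j.1 + t.1 = s; omega
      rw [h1, h2, Function.update_self, Function.update_self]
    · rw [Function.update_of_ne, Function.update_of_ne]
      · have h := hagree ⟨j.1 + t.1, by have := j.isLt; have := t.isLt; omega⟩
        convert h using 2 <;> (ext; (try simp only [Fin.val_mk]); omega)
      · intro h; have : s - k + j.1 + t.1 = s := congrArg Fin.val h; omega
      · intro h; have : r - k + j.1 + t.1 = r := congrArg Fin.val h; omega
  -- split the four products
  simp only [psi]
  rw [hinit x r' hr1, hinit y s' hs1,
    prod_split hr1 hrn (fun ℓ => a (window hkn ℓ x)),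
    prod_split hr1 hrn (fun ℓ => a (window hkn ℓ (Function.update x r' η))),
    prod_split hs1 hsn (fun ℓ => a (window hkn ℓ y)),
    prod_split hs1 hsn (fun ℓ => a (window hkn ℓ (Function.update y s' η)))]
  have hxouter : ∀ ℓ ∈ (Finset.univ.filter
      (fun ℓ : Fin (n - k) => r - k ≤ ℓ.1 ∧ ℓ.1 ≤ r))ᶜ,
      a (window hkn ℓ (Function.update x r' η)) = a (window hkn ℓ x) := by
    intro ℓ hℓ
    simp only [Finset.mem_compl, Finset.mem_filter, Finset.mem_univ, true_and, not_and,
      not_le] at hℓ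
    have hcond : ℓ.1 + k < r'.1 ∨ r'.1 < ℓ.1 := by
      have hv : r'.1 = r := rfl
      rcases Nat.lt_or_ge ℓ.1 (r - k) with h | h
      · left; omega
      · right; rw [show r'.1 = r from rfl]; exact hℓ h
    rw [hwin x r' ℓ hcond]
  have hyouter : ∀ ℓ ∈ (Finset.univ.filter
      (fun ℓ : Fin (n - k) => s - k ≤ ℓ.1 ∧ ℓ.1 ≤ s))ᶜ,
      a (window hkn ℓ (Function.update y s' η)) = a (window hkn ℓ y) := by
    intro ℓ hℓ
    simp only [Finset.mem_compl, Finset.mem_filter, Finset.mem_univ, true_and, not_and,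
      not_le] at hℓ
    have hcond : ℓ.1 + k < s'.1 ∨ s'.1 < ℓ.1 := by
      have hv : s'.1 = s := rfl
      rcases Nat.lt_or_ge ℓ.1 (s - k) with h | h
      · left; omega
      · right; rw [show s'.1 = s from rfl]; exact hℓ h
    rw [hwin y s' ℓ hcond]
  rw [Finset.prod_congr rfl hxouter, Finset.prod_congr rfl hyouter]
  have hmid : (∏ j : Fin (k + 1),
      a (window hkn ⟨r - k + j.1, by have := j.isLt; omega⟩ x))
      = ∏ j : Fin (k + 1), a (window hkn ⟨s - k + j.1, by have := j.isLt; omega⟩ y) :=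
    Finset.prod_congr rfl fun j _ => by rw [key j]
  have hmid' : (∏ j : Fin (k + 1),
      a (window hkn ⟨r - k + j.1, by have := j.isLt; omega⟩ (Function.update x r' η)))
      = ∏ j : Fin (k + 1),
        a (window hkn ⟨s - k + j.1, by have := j.isLt; omega⟩ (Function.update y s' η)) :=
    Finset.prod_congr rfl fun j _ => by rw [key' j]
  simp only [hmid, hmid']
  ring

end MSM
end

section
/- Let S = {0, 1}, n = 3, k = 1, and let ψ* be the ring homomorphism from ℝ[p_{ijl} : i, j, l ∈ {0,1}] to ℝ[π_0, π_1, a_{00}, a_{01}, a_{10}, a_{11}] with ψ*(p_{ijl}) = π_i·a_{ij}·a_{jl}. Then ker(ψ*) equals the ideal generated by the six binomials p_{011}p_{110} − p_{010}p_{111}, p_{011}p_{100} − p_{001}p_{110}, p_{001}p_{100} − p_{000}p_{101}, p_{001}p_{110}² − p_{010}p_{100}p_{111}, p_{000}p_{011}p_{101} − p_{001}²p_{110}, and p_{000}p_{101}p_{110}² − p_{010}p_{100}²p_{111}. -/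
open MvPolynomial

namespace MSM

variable {S : Type*}

/-- The joint-probability variable `p_{ijl}` for the binary first-order chain on three
time points. -/
noncomputable def pp (i j l : Fin 2) : MvPolynomial (Fin 3 → Fin 2) ℝ := X ![i, j, l]

/-- The pullback `ψ*` for the homogeneous binary first-order chain on three time points:
`ψ*(p_{ijl}) = π_i · a_{ij} · a_{jl}`. -/
noncomputable def psiStar3 : MvPolynomial (Fin 3 → Fin 2) ℝ →ₐ[ℝ]
    MvPolynomial (Fin 2 ⊕ Fin 2 × Fin 2) ℝ :=
  aeval fun x => X (Sum.inl (x 0)) * X (Sum.inr (x 0, x 1)) * X (Sum.inr (x 1, x 2))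

noncomputable def Jideal : Ideal (MvPolynomial (Fin 3 → Fin 2) ℝ) :=
  Ideal.span
      ({ pp 0 1 1 * pp 1 1 0 - pp 0 1 0 * pp 1 1 1,
         pp 0 1 1 * pp 1 0 0 - pp 0 0 1 * pp 1 1 0,
         pp 0 0 1 * pp 1 0 0 - pp 0 0 0 * pp 1 0 1,
         pp 0 0 1 * pp 1 1 0 ^ 2 - pp 0 1 0 * pp 1 0 0 * pp 1 1 1,
         pp 0 0 0 * pp 0 1 1 * pp 1 0 1 - pp 0 0 1 ^ 2 * pp 1 1 0,
         pp 0 0 0 * pp 1 0 1 * pp 1 1 0 ^ 2 - pp 0 1 0 * pp 1 0 0 ^ 2 * pp 1 1 1 } :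
        Set (MvPolynomial (Fin 3 → Fin 2) ℝ))

lemma hg1 : pp 0 1 1 * pp 1 1 0 - pp 0 1 0 * pp 1 1 1 ∈ Jideal :=
  Ideal.subset_span (by simp)
lemma hg2 : pp 0 1 1 * pp 1 0 0 - pp 0 0 1 * pp 1 1 0 ∈ Jideal :=
  Ideal.subset_span (by simp)
lemma hg3 : pp 0 0 1 * pp 1 0 0 - pp 0 0 0 * pp 1 0 1 ∈ Jideal :=
  Ideal.subset_span (by simp)

structure E8 where
  (ea eb ec ed ee ef eg eh : ℕ)

noncomputable def M (u : E8) : MvPolynomial (Fin 3 → Fin 2) ℝ :=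
  pp 0 0 0 ^ u.ea * pp 0 0 1 ^ u.eb * pp 0 1 0 ^ u.ec * pp 0 1 1 ^ u.ed *
  pp 1 0 0 ^ u.ee * pp 1 0 1 ^ u.ef * pp 1 1 0 ^ u.eg * pp 1 1 1 ^ u.eh

def wt (u : E8) : ℕ :=
  4 * u.ea + 2 * u.eb + 8 * u.ec + u.ed + 7 * u.ee + 7 * u.ef + u.eg + 8 * u.eh

def A6 (u : E8) : ℕ × ℕ × ℕ × ℕ × ℕ × ℕ :=
  (u.ea + u.eb + u.ec + u.ed, u.ee + u.ef + u.eg + u.eh, 2 * u.ea + u.eb + u.ee,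
   u.eb + u.ec + u.ed + u.ef, u.ec + u.ee + u.ef + u.eg, u.ed + u.eg + 2 * u.eh)

set_option maxHeartbeats 4000000 in
lemma key : ∀ n : ℕ, ∀ u v : E8, wt u + wt v ≤ n → A6 u = A6 v → M u - M v ∈ Jideal := by
  intro n
  induction n using Nat.strong_induction_on with
  | _ n IH =>
    rintro ⟨a, b, c, d, e, f, g, h⟩ ⟨a1, b1, c1, d1, e1, f1, g1, h1⟩ hw hA
    simp only [A6, Prod.mk.injEq] at hA
    simp only [wt] at hw
    by_cases hu1 : 0 < c ∧ 0 < h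
    · obtain ⟨c0, rfl⟩ : ∃ k, c = k + 1 := ⟨c - 1, by omega⟩
      obtain ⟨h0, rfl⟩ : ∃ k, h = k + 1 := ⟨h - 1, by omega⟩
      have m1 : M ⟨a, b, c0 + 1, d, e, f, g, h0 + 1⟩ - M ⟨a, b, c0, d + 1, e, f, g + 1, h0⟩
          = M ⟨a, b, c0, d, e, f, g, h0⟩ * (-(pp 0 1 1 * pp 1 1 0 - pp 0 1 0 * pp 1 1 1)) := by
        simp only [M]; ring
      have hm2 : M ⟨a, b, c0, d + 1, e, f, g + 1, h0⟩ - M ⟨a1, b1, c1, d1, e1, f1, g1, h1⟩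
          ∈ Jideal := by
        refine IH _ ?_ _ _ le_rfl ?_
        · simp only [wt]; omega
        · simp only [A6, Prod.mk.injEq]; omega
      have := add_mem (m1 ▸ Ideal.mul_mem_left _ _ (neg_mem hg1)) hm2
      rwa [sub_add_sub_cancel] at this
    by_cases hu2 : 0 < d ∧ 0 < e
    · obtain ⟨d0, rfl⟩ : ∃ k, d = k + 1 := ⟨d - 1, by omega⟩
      obtain ⟨e0, rfl⟩ : ∃ k, e = k + 1 := ⟨e - 1, by omega⟩
      have m1 : M ⟨a, b, c, d0 + 1, e0 + 1, f, g, h⟩ - M ⟨a, b + 1, c, d0, e0, f, g + 1, h⟩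
          = M ⟨a, b, c, d0, e0, f, g, h⟩ * (pp 0 1 1 * pp 1 0 0 - pp 0 0 1 * pp 1 1 0) := by
        simp only [M]; ring
      have hm2 : M ⟨a, b + 1, c, d0, e0, f, g + 1, h⟩ - M ⟨a1, b1, c1, d1, e1, f1, g1, h1⟩
          ∈ Jideal := by
        refine IH _ ?_ _ _ le_rfl ?_
        · simp only [wt]; omega
        · simp only [A6, Prod.mk.injEq]; omega
      have := add_mem (m1 ▸ Ideal.mul_mem_left _ _ hg2) hm2
      rwa [sub_add_sub_cancel] at this
    by_cases hu3 : 0 < a ∧ 0 < f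
    · obtain ⟨a0, rfl⟩ : ∃ k, a = k + 1 := ⟨a - 1, by omega⟩
      obtain ⟨f0, rfl⟩ : ∃ k, f = k + 1 := ⟨f - 1, by omega⟩
      have m1 : M ⟨a0 + 1, b, c, d, e, f0 + 1, g, h⟩ - M ⟨a0, b + 1, c, d, e + 1, f0, g, h⟩
          = M ⟨a0, b, c, d, e, f0, g, h⟩ * (-(pp 0 0 1 * pp 1 0 0 - pp 0 0 0 * pp 1 0 1)) := by
        simp only [M]; ring
      have hm2 : M ⟨a0, b + 1, c, d, e + 1, f0, g, h⟩ - M ⟨a1, b1, c1, d1, e1, f1, g1, h1⟩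
          ∈ Jideal := by
        refine IH _ ?_ _ _ le_rfl ?_
        · simp only [wt]; omega
        · simp only [A6, Prod.mk.injEq]; omega
      have := add_mem (m1 ▸ Ideal.mul_mem_left _ _ (neg_mem hg3)) hm2
      rwa [sub_add_sub_cancel] at this
    by_cases hv1 : 0 < c1 ∧ 0 < h1
    · obtain ⟨c0, rfl⟩ : ∃ k, c1 = k + 1 := ⟨c1 - 1, by omega⟩
      obtain ⟨h0, rfl⟩ : ∃ k, h1 = k + 1 := ⟨h1 - 1, by omega⟩
      have m1 : M ⟨a1, b1, c0, d1 + 1, e1, f1, g1 + 1, h0⟩ - M ⟨a1, b1, c0 + 1, d1, e1, f1, g1, h0 + 1⟩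
          = M ⟨a1, b1, c0, d1, e1, f1, g1, h0⟩ * (pp 0 1 1 * pp 1 1 0 - pp 0 1 0 * pp 1 1 1) := by
        simp only [M]; ring
      have hm2 : M ⟨a, b, c, d, e, f, g, h⟩ - M ⟨a1, b1, c0, d1 + 1, e1, f1, g1 + 1, h0⟩
          ∈ Jideal := by
        refine IH _ ?_ _ _ le_rfl ?_
        · simp only [wt]; omega
        · simp only [A6, Prod.mk.injEq]; omega
      have := add_mem hm2 (m1 ▸ Ideal.mul_mem_left _ _ hg1)
      rwa [sub_add_sub_cancel] at this
    by_cases hv2 : 0 < d1 ∧ 0 < e1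
    · obtain ⟨d0, rfl⟩ : ∃ k, d1 = k + 1 := ⟨d1 - 1, by omega⟩
      obtain ⟨e0, rfl⟩ : ∃ k, e1 = k + 1 := ⟨e1 - 1, by omega⟩
      have m1 : M ⟨a1, b1 + 1, c1, d0, e0, f1, g1 + 1, h1⟩ - M ⟨a1, b1, c1, d0 + 1, e0 + 1, f1, g1, h1⟩
          = M ⟨a1, b1, c1, d0, e0, f1, g1, h1⟩ * (-(pp 0 1 1 * pp 1 0 0 - pp 0 0 1 * pp 1 1 0)) := by
        simp only [M]; ring
      have hm2 : M ⟨a, b, c, d, e, f, g, h⟩ - M ⟨a1, b1 + 1, c1, d0, e0, f1, g1 + 1, h1⟩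
          ∈ Jideal := by
        refine IH _ ?_ _ _ le_rfl ?_
        · simp only [wt]; omega
        · simp only [A6, Prod.mk.injEq]; omega
      have := add_mem hm2 (m1 ▸ Ideal.mul_mem_left _ _ (neg_mem hg2))
      rwa [sub_add_sub_cancel] at this
    by_cases hv3 : 0 < a1 ∧ 0 < f1
    · obtain ⟨a0, rfl⟩ : ∃ k, a1 = k + 1 := ⟨a1 - 1, by omega⟩
      obtain ⟨f0, rfl⟩ : ∃ k, f1 = k + 1 := ⟨f1 - 1, by omega⟩
      have m1 : M ⟨a0, b1 + 1, c1, d1, e1 + 1, f0, g1, h1⟩ - M ⟨a0 + 1, b1, c1, d1, e1, f0 + 1, g1, h1⟩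
          = M ⟨a0, b1, c1, d1, e1, f0, g1, h1⟩ * (pp 0 0 1 * pp 1 0 0 - pp 0 0 0 * pp 1 0 1) := by
        simp only [M]; ring
      have hm2 : M ⟨a, b, c, d, e, f, g, h⟩ - M ⟨a0, b1 + 1, c1, d1, e1 + 1, f0, g1, h1⟩
          ∈ Jideal := by
        refine IH _ ?_ _ _ le_rfl ?_
        · simp only [wt]; omega
        · simp only [A6, Prod.mk.injEq]; omega
      have := add_mem hm2 (m1 ▸ Ideal.mul_mem_left _ _ hg3)
      rwa [sub_add_sub_cancel] at this
    · have huv : E8.mk a b c d e f g h = E8.mk a1 b1 c1 d1 e1 f1 g1 h1 := by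
        simp only [E8.mk.injEq]
        omega
      rw [huv, sub_self]
      exact zero_mem _

lemma psi_pp (i j l : Fin 2) : psiStar3 (pp i j l)
    = X (Sum.inl i) * X (Sum.inr (i, j)) * X (Sum.inr (j, l)) := by
  simp [psiStar3, pp]

noncomputable def Af (u : E8) : (Fin 2 ⊕ Fin 2 × Fin 2) →₀ ℕ :=
  Finsupp.single (Sum.inl 0) (u.ea + u.eb + u.ec + u.ed)
    + Finsupp.single (Sum.inl 1) (u.ee + u.ef + u.eg + u.eh)
    + Finsupp.single (Sum.inr (0, 0)) (2 * u.ea + u.eb + u.ee)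
    + Finsupp.single (Sum.inr (0, 1)) (u.eb + u.ec + u.ed + u.ef)
    + Finsupp.single (Sum.inr (1, 0)) (u.ec + u.ee + u.ef + u.eg)
    + Finsupp.single (Sum.inr (1, 1)) (u.ed + u.eg + 2 * u.eh)

lemma psiM (u : E8) : psiStar3 (M u) = monomial (Af u) 1 := by
  obtain ⟨a, b, c, d, e, f, g, h⟩ := u
  have e1 : psiStar3 (M ⟨a, b, c, d, e, f, g, h⟩)
      = X (Sum.inl 0) ^ (a + b + c + d) * X (Sum.inl 1) ^ (e + f + g + h)
        * X (Sum.inr (0, 0)) ^ (2 * a + b + e) * X (Sum.inr (0, 1)) ^ (b + c + d + f)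
        * X (Sum.inr (1, 0)) ^ (c + e + f + g) * X (Sum.inr (1, 1)) ^ (d + g + 2 * h) := by
    simp only [M, map_mul, map_pow, psi_pp]
    ring
  rw [e1]
  simp [Af, X_pow_eq_monomial, monomial_mul]

lemma A6_of_Af (x u : E8) (H : Af x = Af u) : A6 x = A6 u := by
  obtain ⟨a, b, c, d, e, f, g, h⟩ := x
  obtain ⟨a1, b1, c1, d1, e1, f1, g1, h1⟩ := u
  have k1 := DFunLike.congr_fun H (Sum.inl 0)
  have k2 := DFunLike.congr_fun H (Sum.inl 1)
  have k3 := DFunLike.congr_fun H (Sum.inr (0, 0))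
  have k4 := DFunLike.congr_fun H (Sum.inr (0, 1))
  have k5 := DFunLike.congr_fun H (Sum.inr (1, 0))
  have k6 := DFunLike.congr_fun H (Sum.inr (1, 1))
  simp (config := { decide := true }) [Af, Finsupp.single_apply] at k1 k2 k3 k4 k5 k6
  simp only [A6, Prod.mk.injEq]
  omega



def toE8 (t : (Fin 3 → Fin 2) →₀ ℕ) : E8 :=
  ⟨t ![0, 0, 0], t ![0, 0, 1], t ![0, 1, 0], t ![0, 1, 1],
   t ![1, 0, 0], t ![1, 0, 1], t ![1, 1, 0], t ![1, 1, 1]⟩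

lemma Mto (t : (Fin 3 → Fin 2) →₀ ℕ) : (monomial t (1 : ℝ)) = M (toE8 t) := by
  have h8 : ∀ q : Fin 3 → Fin 2, q = ![0,0,0] ∨ q = ![0,0,1] ∨ q = ![0,1,0] ∨ q = ![0,1,1] ∨
      q = ![1,0,0] ∨ q = ![1,0,1] ∨ q = ![1,1,0] ∨ q = ![1,1,1] := by
    intro q
    have hq : q = ![q 0, q 1, q 2] := by funext i; fin_cases i <;> rfl
    have h2 : ∀ x : Fin 2, x = 0 ∨ x = 1 := by decide
    rcases h2 (q 0) with h0 | h0 <;> rcases h2 (q 1) with h1 | h1 <;>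
      rcases h2 (q 2) with hh | hh <;> rw [hq, h0, h1, hh] <;> simp
  have hdecomp : t = Finsupp.single ![0,0,0] (t ![0,0,0]) + Finsupp.single ![0,0,1] (t ![0,0,1])
      + Finsupp.single ![0,1,0] (t ![0,1,0]) + Finsupp.single ![0,1,1] (t ![0,1,1])
      + Finsupp.single ![1,0,0] (t ![1,0,0]) + Finsupp.single ![1,0,1] (t ![1,0,1])
      + Finsupp.single ![1,1,0] (t ![1,1,0]) + Finsupp.single ![1,1,1] (t ![1,1,1]) := by
    ext q
    rcases h8 q with rfl|rfl|rfl|rfl|rfl|rfl|rfl|rfl <;>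
      simp (config := { decide := true }) [Finsupp.single_apply]
  simp only [M, toE8, pp]
  conv_lhs => rw [hdecomp]
  simp [X_pow_eq_monomial, monomial_mul]

open Classical in
noncomputable def sec (t : (Fin 2 ⊕ Fin 2 × Fin 2) →₀ ℕ) :
    MvPolynomial (Fin 3 → Fin 2) ℝ ⧸ Jideal :=
  if h : ∃ u : E8, Af u = t then Ideal.Quotient.mk Jideal (M h.choose) else 0

noncomputable def Lmap : MvPolynomial (Fin 2 ⊕ Fin 2 × Fin 2) ℝ →+
    MvPolynomial (Fin 3 → Fin 2) ℝ ⧸ Jideal :=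
  (Finsupp.liftAddHom fun t =>
    (AddMonoidHom.mulRight (sec t)).comp
      (((Ideal.Quotient.mk Jideal).comp (C : ℝ →+* MvPolynomial (Fin 3 → Fin 2) ℝ)).toAddMonoidHom)).comp
      AddMonoidAlgebra.coeffAddEquiv.toAddMonoidHom

lemma L_monomial (t : (Fin 2 ⊕ Fin 2 × Fin 2) →₀ ℕ) (r : ℝ) :
    Lmap (monomial t r) = Ideal.Quotient.mk Jideal (C r) * sec t := by
  rw [← single_eq_monomial]
  exact Finsupp.liftAddHom_apply_single (fun t => (AddMonoidHom.mulRight (sec t)).comp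
    (((Ideal.Quotient.mk Jideal).comp (C : ℝ →+* MvPolynomial (Fin 3 → Fin 2) ℝ)).toAddMonoidHom)) t r

lemma sec_Af (u : E8) : sec (Af u) = Ideal.Quotient.mk Jideal (M u) := by
  have hex : ∃ x : E8, Af x = Af u := ⟨u, rfl⟩
  simp only [sec]; rw [dif_pos hex]
  exact Ideal.Quotient.eq.mpr (key _ hex.choose u le_rfl (A6_of_Af _ _ hex.choose_spec))

lemma main (p : MvPolynomial (Fin 3 → Fin 2) ℝ) :
    Lmap (psiStar3 p) = Ideal.Quotient.mk Jideal p := by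
  induction p using MvPolynomial.induction_on' with
  | monomial t r =>
    have h1 : (monomial t r : MvPolynomial (Fin 3 → Fin 2) ℝ) = C r * monomial t 1 := by
      rw [C_mul_monomial, mul_one]
    have h2 : psiStar3 (C r) = C r := by
      simp [psiStar3]
    rw [h1, Mto, map_mul, h2, psiM, C_mul_monomial, mul_one, L_monomial, sec_Af, ← map_mul]
  | add p q hp hq => rw [map_add, map_add, map_add, hp, hq]


/-- The kernel of `ψ*` for the homogeneous binary first-order chain on three time points is
generated by the six listed binomials. -/
theorem stmt11 :
    RingHom.ker psiStar3 = Ideal.span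
      ({ pp 0 1 1 * pp 1 1 0 - pp 0 1 0 * pp 1 1 1,
         pp 0 1 1 * pp 1 0 0 - pp 0 0 1 * pp 1 1 0,
         pp 0 0 1 * pp 1 0 0 - pp 0 0 0 * pp 1 0 1,
         pp 0 0 1 * pp 1 1 0 ^ 2 - pp 0 1 0 * pp 1 0 0 * pp 1 1 1,
         pp 0 0 0 * pp 0 1 1 * pp 1 0 1 - pp 0 0 1 ^ 2 * pp 1 1 0,
         pp 0 0 0 * pp 1 0 1 * pp 1 1 0 ^ 2 - pp 0 1 0 * pp 1 0 0 ^ 2 * pp 1 1 1 } :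
        Set (MvPolynomial (Fin 3 → Fin 2) ℝ)) := by
  refine le_antisymm ?_ ?_
  · intro p hp
    have h0 : psiStar3 p = 0 := hp
    have hm := main p
    rw [h0, map_zero] at hm
    exact Ideal.Quotient.eq_zero_iff_mem.mp hm.symm
  · rw [Ideal.span_le]
    rintro x hx
    simp only [Set.mem_insert_iff, Set.mem_singleton_iff] at hx
    simp only [SetLike.mem_coe, RingHom.mem_ker]
    rcases hx with rfl|rfl|rfl|rfl|rfl|rfl <;>
      · simp only [map_sub, map_mul, map_pow, psi_pp]; ring


end MSM
end

section
/- Let S be a nonempty finite set and 1 ≤ k < n integers. Suppose (π, a) and (π', a') are nonhomogeneous k-th order parameters such that π(w) > 0 and π'(w) > 0 for all w ∈ S^k, Σ_{w∈S^k} π(w) = Σ_{w∈S^k} π'(w) = 1, and for every ℓ ∈ {k+1,…,n} and every h ∈ S^k, a^(ℓ)(h,j) > 0 and a'^(ℓ)(h,j) > 0 for all j ∈ S with Σ_{j∈S} a^(ℓ)(h,j) = Σ_{j∈S} a'^(ℓ)(h,j) = 1. If φ(π, a) = φ(π', a'), then π = π' and a^(ℓ) = a'^(ℓ) for every ℓ.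 In other words, the nonhomogeneous k-th order multistate Markov model is globally identifiable on strictly positive stochastic parameters. -/
open MvPolynomial

namespace MSM

variable {S : Type*}

/-! ### Auxiliary lemmas -/

lemma snoc_val' {α : Type*} {m : ℕ} (y : Fin m → α) (j : α) (i : Fin (m + 1)) :
    (Fin.snoc y j : Fin (m + 1) → α) i = if h : i.1 < m then y ⟨i.1, h⟩ else j := by
  induction i using Fin.lastCases with
  | last =>
    rw [Fin.snoc_last, dif_neg (by simp)]
  | cast i =>
    rw [Fin.snoc_castSucc, dif_pos (by simpa using i.isLt)]
    exact congrArg y (Fin.ext (by simp))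

lemma cons_val' {α : Type*} {m : ℕ} (j : α) (z : Fin m → α) (i : Fin (m + 1)) :
    (Fin.cons j z : Fin (m + 1) → α) i = if h : i.1 = 0 then j
      else z ⟨i.1 - 1, by have := i.isLt; omega⟩ := by
  induction i using Fin.cases with
  | zero => simp
  | succ i =>
    rw [Fin.cons_succ, dif_neg (by simp)]
    exact congrArg z (Fin.ext (by simp))

/-- glue a prefix and a suffix into a path -/
def ext {n m r : ℕ} (h : m + r = n) (y : Fin m → S) (z : Fin r → S) : Fin n → S :=
  fun i => if hi : i.1 < m then y ⟨i.1, hi⟩ else z ⟨i.1 - m, by have := i.isLt; omega⟩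

/-- partial product -/
noncomputable def part {n k : ℕ} (pi : (Fin k → S) → ℝ)
    (a : Fin (n - k) → (Fin (k + 1) → S) → ℝ) (d : ℕ) (hd : k + d ≤ n)
    (y : Fin (k + d) → S) : ℝ :=
  pi (fun i => y (Fin.castLE (by omega) i)) *
    ∏ ℓ : Fin d, a ⟨ℓ.1, by have := ℓ.isLt; omega⟩
      (fun t => y ⟨ℓ.1 + t.1, by have := ℓ.isLt; have := t.isLt; omega⟩)

lemma part_snoc {n k : ℕ} (pi : (Fin k → S) → ℝ)
    (a : Fin (n - k) → (Fin (k + 1) → S) → ℝ) (d : ℕ) (hd : k + (d + 1) ≤ n)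
    (y : Fin (k + d) → S) (j : S) :
    part pi a (d + 1) hd (Fin.snoc y j) =
      part pi a d (by omega) y *
        a ⟨d, by omega⟩ (Fin.snoc (fun t => y ⟨d + t.1, by have := t.isLt; omega⟩) j) := by
  unfold part
  rw [Fin.prod_univ_castSucc, ← mul_assoc]
  congr 1
  · congr 1
    · refine congrArg pi (funext fun i => ?_)
      rw [snoc_val']
      split_ifs with hc
      · rfl
      · refine (hc ?_).elim
        have h1 := i.isLt
        simp only [Fin.coe_castLE, Nat.add_eq] at hc ⊢
        omega
    · refine Finset.prod_congr rfl fun ℓ _ => ?_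
      refine congrArg₂ a (Fin.ext (by simp)) (funext fun t => ?_)
      rw [snoc_val']
      split_ifs with hc
      · rfl
      · refine (hc ?_).elim
        have h1 := ℓ.isLt
        have h2 := t.isLt
        simp only [Fin.val_mk, Fin.coe_castSucc, Nat.add_eq] at hc ⊢
        omega
  · refine congrArg₂ a (Fin.ext (by simp)) (funext fun t => ?_)
    rw [snoc_val', snoc_val']
    have h2 := t.isLt
    split_ifs with hc1 hc2 hc2
    · rfl
    · refine (hc2 ?_).elim
      simp only [Fin.val_mk, Fin.val_last, Nat.add_eq] at hc1 ⊢
      omega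
    · refine (hc1 ?_).elim
      simp only [Fin.val_mk, Fin.val_last, Nat.add_eq] at hc2 ⊢
      omega
    · rfl

lemma ext_cons {n m r : ℕ} (h : m + (r + 1) = n) (h' : m + 1 + r = n)
    (y : Fin m → S) (j : S) (z : Fin r → S) :
    ext h y (Fin.cons j z) = ext h' (Fin.snoc y j) z := by
  funext i
  simp only [ext, cons_val', snoc_val']
  split_ifs <;>
    first
      | rfl
      | omega
      | exact congrArg z (Fin.ext (by simp; omega))
      | exact congrArg y (Fin.ext (by simp; omega))

lemma marg_s12 {n k : ℕ} [Fintype S] (hkn : k < n) (pi : (Fin k → S) → ℝ)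
    (a : Fin (n - k) → (Fin (k + 1) → S) → ℝ)
    (hasum : ∀ (ℓ : Fin (n - k)) (h : Fin k → S), (∑ j : S, a ℓ (Fin.snoc h j)) = 1) :
    ∀ (r d : ℕ) (h : k + d + r = n) (y : Fin (k + d) → S),
      (∑ z : Fin r → S, phi hkn pi a (ext h y z)) = part pi a d (by omega) y := by
  intro r
  induction r with
  | zero =>
    intro d h y
    rw [Fintype.sum_unique]
    unfold phi part
    congr 1
    · refine congrArg pi (funext fun i => ?_)
      simp only [pathInit, ext]
      split_ifs with hc
      · rfl
      · exact (hc (by have := i.isLt; simp only [Fin.coe_castLE]; omega)).elim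
    · have hd' : d = n - k := by omega
      rw [← Fin.prod_congr' (fun ℓ => a ℓ (window hkn ℓ (ext h y default))) hd']
      refine Finset.prod_congr rfl fun ℓ _ => ?_
      congr 1
      funext t
      simp only [window, ext]
      split_ifs with hc
      · rfl
      · exact (hc (by have := ℓ.isLt; have := t.isLt; simp only [Fin.coe_cast]; omega)).elim
  | succ r ih =>
    intro d h y
    have h' : k + (d + 1) + r = n := by omega
    calc (∑ z : Fin (r + 1) → S, phi hkn pi a (ext h y z))
        = ∑ p : S × (Fin r → S), phi hkn pi a (ext h y (Fin.cons p.1 p.2)) :=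
          (Equiv.sum_comp (Fin.consEquiv fun _ => S) _).symm
      _ = ∑ j : S, ∑ z' : Fin r → S, phi hkn pi a (ext h' (Fin.snoc y j) z') := by
          rw [Fintype.sum_prod_type]
          exact Finset.sum_congr rfl fun j _ => Finset.sum_congr rfl fun z' _ => by
            rw [ext_cons h h' y j z']
      _ = ∑ j : S, part pi a (d + 1) (by omega) (Fin.snoc y j) :=
          Finset.sum_congr rfl fun j _ => ih (d + 1) h' (Fin.snoc y j)
      _ = ∑ j : S, part pi a d (by omega) y *
            a ⟨d, by omega⟩ (Fin.snoc (fun t => y ⟨d + t.1, by have := t.isLt; omega⟩) j) :=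
          Finset.sum_congr rfl fun j _ => part_snoc pi a d (by omega) y j
      _ = part pi a d (by omega) y := by
          rw [← Finset.mul_sum, hasum, mul_one]



/-- Global identifiability of the nonhomogeneous `k`-th order multistate Markov model on
strictly positive stochastic parameters. -/
theorem stmt12 (S : Type*) [Fintype S] [Nonempty S] (n k : ℕ) (hk : 1 ≤ k) (hkn : k < n)
    (pi pi' : (Fin k → S) → ℝ) (a a' : Fin (n - k) → (Fin (k + 1) → S) → ℝ)
    (hpi : ∀ w, 0 < pi w) (hpi' : ∀ w, 0 < pi' w)
    (hpisum : (∑ w : Fin k → S, pi w) = 1) (hpisum' : (∑ w : Fin k → S, pi' w) = 1)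
    (ha : ∀ (ℓ : Fin (n - k)) (h : Fin k → S) (j : S), 0 < a ℓ (Fin.snoc h j))
    (ha' : ∀ (ℓ : Fin (n - k)) (h : Fin k → S) (j : S), 0 < a' ℓ (Fin.snoc h j))
    (hasum : ∀ (ℓ : Fin (n - k)) (h : Fin k → S), (∑ j : S, a ℓ (Fin.snoc h j)) = 1)
    (hasum' : ∀ (ℓ : Fin (n - k)) (h : Fin k → S), (∑ j : S, a' ℓ (Fin.snoc h j)) = 1)
    (heq : phi hkn pi a = phi hkn pi' a') :
    pi = pi' ∧ a = a' := by
  have key : ∀ (d : ℕ) (hd : k + d ≤ n) (y : Fin (k + d) → S),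
      part pi a d hd y = part pi' a' d hd y := by
    intro d hd y
    have h1 := marg_s12 hkn pi a hasum (n - (k + d)) d (by omega) y
    have h2 := marg_s12 hkn pi' a' hasum' (n - (k + d)) d (by omega) y
    rw [heq] at h1
    exact h1.symm.trans h2
  have gen : ∀ (ℓ' : Fin (n - k)) (w : Fin (k + 1) → S), 0 < a ℓ' w := by
    intro ℓ' w
    have h := ha ℓ' (Fin.init w) (w (Fin.last k))
    rwa [Fin.snoc_init_self] at h
  have hpos : ∀ (d : ℕ) (hd : k + d ≤ n) (y : Fin (k + d) → S), 0 < part pi a d hd y := by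
    intro d hd y
    unfold part
    exact mul_pos (hpi _) (Finset.prod_pos fun ℓ _ => gen _ _)
  constructor
  · funext w
    have h := key 0 (by omega) w
    simp only [part, Fin.prod_univ_zero, mul_one] at h
    exact h
  · funext ℓ w
    have hsn := Fin.snoc_init_self w
    rw [← hsn]
    suffices hgen : ∀ (hh : Fin k → S) (j : S), a ℓ (Fin.snoc hh j) = a' ℓ (Fin.snoc hh j) from
      hgen _ _
    intro hh j
    have hd1 : k + (ℓ.1 + 1) ≤ n := by have := ℓ.isLt; omega
    set y : Fin (k + ℓ.1) → S := fun i =>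
      if hi : i.1 < ℓ.1 then Classical.arbitrary S
      else hh ⟨i.1 - ℓ.1, by have := i.isLt; omega⟩ with hy
    have e1 := key (ℓ.1 + 1) hd1 (Fin.snoc y j)
    rw [part_snoc pi a ℓ.1 hd1 y j, part_snoc pi' a' ℓ.1 hd1 y j] at e1
    have hwin : (fun t : Fin k => y ⟨ℓ.1 + t.1, by have := t.isLt; omega⟩) = hh := by
      funext t
      simp only [hy]
      rw [dif_neg (by omega)]
      exact congrArg hh (Fin.ext (by simp only [Fin.val_mk]; omega))
    rw [hwin] at e1
    have e0 := key ℓ.1 (by omega) y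
    rw [← e0] at e1
    have hne : part pi a ℓ.1 (by omega) y ≠ 0 := ne_of_gt (hpos _ _ _)
    have hc := mul_left_cancel₀ hne e1
    exact hc

end MSM
end

section
/- Let S be a nonempty finite set and 1 ≤ k < n integers. Suppose (π, a) and (π', a') are homogeneous k-th order parameters such that π(w) > 0 and π'(w) > 0 for all w ∈ S^k, Σ_{w∈S^k} π(w) = Σ_{w∈S^k} π'(w) = 1, and for every h ∈ S^k, a(h,j) > 0 and a'(h,j) > 0 for all j ∈ S with Σ_{j∈S} a(h,j) = Σ_{j∈S} a'(h,j) = 1. If ψ(π, a) = ψ(π', a'), then π = π' and a = a'. In other words, the homogeneous k-th order multistate Markov model is globally identifiable on strictly positive stochastic parameters. -/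
open MvPolynomial

namespace MSM

variable {S : Type*}

lemma snoc_of_lt {T : Type*} {m : ℕ} (y : Fin m → T) (j : T) (q : Fin (m + 1)) (h : q.1 < m) :
    (Fin.snoc y j : Fin (m+1) → T) q = y ⟨q.1, h⟩ := by
  simp only [Fin.snoc, h, dif_pos, Fin.castLT, cast_eq]

lemma snoc_of_eq {T : Type*} {m : ℕ} (y : Fin m → T) (j : T) (q : Fin (m + 1)) (h : q.1 = m) :
    (Fin.snoc y j : Fin (m+1) → T) q = j := by
  have h' : ¬ q.1 < m := by omega
  simp only [Fin.snoc, dif_neg h', cast_eq]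

/-- Global identifiability of the homogeneous `k`-th order multistate Markov model on strictly
positive stochastic parameters. -/
theorem stmt13 (S : Type*) [Fintype S] [Nonempty S] (n k : ℕ) (hk : 1 ≤ k) (hkn : k < n)
    (pi pi' : (Fin k → S) → ℝ) (a a' : (Fin (k + 1) → S) → ℝ)
    (hpi : ∀ w, 0 < pi w) (hpi' : ∀ w, 0 < pi' w)
    (hpisum : (∑ w : Fin k → S, pi w) = 1) (hpisum' : (∑ w : Fin k → S, pi' w) = 1)
    (ha : ∀ (h : Fin k → S) (j : S), 0 < a (Fin.snoc h j))
    (ha' : ∀ (h : Fin k → S) (j : S), 0 < a' (Fin.snoc h j))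
    (hasum : ∀ h : Fin k → S, (∑ j : S, a (Fin.snoc h j)) = 1)
    (hasum' : ∀ h : Fin k → S, (∑ j : S, a' (Fin.snoc h j)) = 1)
    (heq : psi hkn pi a = psi hkn pi' a') :
    pi = pi' ∧ a = a' := by
  classical
  -- telescoping sum lemma
  have aux : ∀ (a0 : (Fin (k + 1) → S) → ℝ),
      (∀ h : Fin k → S, (∑ j : S, a0 (Fin.snoc h j)) = 1) →
      ∀ (r m : ℕ) (hm : k ≤ m) (hmn : m + r = n) (y : Fin m → S),
      (∑ x ∈ Finset.univ.filter
          (fun x : Fin n → S => ∀ i : Fin m, x (Fin.castLE (by omega) i) = y i),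
        ∏ ℓ : Fin (n - k), a0 (window hkn ℓ x))
      = ∏ ℓ : Fin (m - k),
          a0 (fun t => y ⟨ℓ.1 + t.1, by have := ℓ.2; have := t.2; omega⟩) := by
    intro a0 ha0 r
    induction r with
    | zero =>
      intro m hm hmn y
      have hmn' : m = n := by omega
      subst hmn'
      have hset : (Finset.univ.filter
          (fun x : Fin m → S => ∀ i : Fin m, x (Fin.castLE (by omega) i) = y i)) = {y} := by
        ext x
        simp only [Finset.mem_filter, Finset.mem_univ, true_and, Finset.mem_singleton]
        constructor
        · intro h; funext i; exact h i
        · intro h i; subst h; rfl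
      rw [hset, Finset.sum_singleton]
      rfl
    | succ r ih =>
      intro m hm hmn y
      have hmlt : m < n := by omega
      have hsplit : (Finset.univ.filter
          (fun x : Fin n → S => ∀ i : Fin m, x (Fin.castLE (by omega) i) = y i))
          = Finset.univ.biUnion (fun j : S => Finset.univ.filter
            (fun x : Fin n → S => ∀ i : Fin (m + 1),
              x (Fin.castLE (by omega) i) = (Fin.snoc y j : Fin (m+1) → S) i)) := by
        ext x
        simp only [Finset.mem_filter, Finset.mem_univ, true_and, Finset.mem_biUnion]
        constructor
        · intro hx
          refine ⟨x ⟨m, hmlt⟩, fun i => ?_⟩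
          rcases Nat.lt_or_ge i.1 m with h | h
          · rw [snoc_of_lt _ _ _ h]
            exact hx ⟨i.1, h⟩
          · have hi : i.1 = m := by omega
            rw [snoc_of_eq _ _ _ hi]
            congr 1
            exact Fin.ext hi
        · rintro ⟨j, hj⟩ i
          have h := hj ⟨i.1, by omega⟩
          rw [snoc_of_lt _ _ _ i.2] at h
          exact h
      have hdisj : ((Finset.univ : Finset S) : Set S).PairwiseDisjoint
          (fun j : S => Finset.univ.filter
            (fun x : Fin n → S => ∀ i : Fin (m + 1),
              x (Fin.castLE (by omega) i) = (Fin.snoc y j : Fin (m+1) → S) i)) := by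
        intro j _ j' _ hne
        simp only [Function.onFun]
        rw [Finset.disjoint_left]
        intro x hx hx'
        simp only [Finset.mem_filter, Finset.mem_univ, true_and] at hx hx'
        apply hne
        have h1 := hx (Fin.last m)
        have h2 := hx' (Fin.last m)
        rw [Fin.snoc_last] at h1 h2
        rw [← h1, ← h2]
      rw [hsplit, Finset.sum_biUnion hdisj]
      have hstep : ∀ j : S, (∑ x ∈ Finset.univ.filter
            (fun x : Fin n → S => ∀ i : Fin (m + 1),
              x (Fin.castLE (by omega) i) = (Fin.snoc y j : Fin (m+1) → S) i),
          ∏ ℓ : Fin (n - k), a0 (window hkn ℓ x))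
          = ∏ ℓ : Fin (m + 1 - k),
            a0 (fun t => (Fin.snoc y j : Fin (m+1) → S) ⟨ℓ.1 + t.1, by have := ℓ.2; have := t.2; omega⟩) :=
        fun j => ih (m + 1) (by omega) (by omega) (Fin.snoc y j)
      rw [Finset.sum_congr rfl (fun j _ => hstep j)]
      have hprod : ∀ j : S, (∏ ℓ : Fin (m + 1 - k),
            a0 (fun t => (Fin.snoc y j : Fin (m+1) → S) ⟨ℓ.1 + t.1, by have := ℓ.2; have := t.2; omega⟩))
          = (∏ ℓ : Fin (m - k),
              a0 (fun t => y ⟨ℓ.1 + t.1, by have := ℓ.2; have := t.2; omega⟩))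
            * a0 (Fin.snoc (fun t : Fin k => y ⟨m - k + t.1, by have := t.2; omega⟩) j) := by
        intro j
        have e : (m - k) + 1 = m + 1 - k := by omega
        rw [← Fin.prod_congr' _ e, Fin.prod_univ_castSucc]
        congr 1
        · apply Finset.prod_congr rfl
          intro ℓ _
          congr 1
          funext t
          have hlt : (Fin.cast e ℓ.castSucc).1 + t.1 < m := by
            have := ℓ.2; have := t.2
            simp only [Fin.coe_cast, Fin.coe_castSucc]
            omega
          rw [snoc_of_lt _ _ _ hlt]
          rfl
        · congr 1
          funext t
          rcases Nat.lt_or_ge t.1 k with h | h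
          · have hlt : (Fin.cast e (Fin.last (m - k))).1 + t.1 < m := by
              simp only [Fin.coe_cast, Fin.val_last]
              omega
            rw [snoc_of_lt _ _ _ hlt, snoc_of_lt _ _ _ h]
            rfl
          · have hteq : t.1 = k := by have := t.2; omega
            have heqm : (Fin.cast e (Fin.last (m - k))).1 + t.1 = m := by
              simp only [Fin.coe_cast, Fin.val_last]
              omega
            rw [snoc_of_eq _ _ _ heqm, snoc_of_eq _ _ _ hteq]
      rw [Finset.sum_congr rfl (fun j _ => hprod j), ← Finset.mul_sum,
        ha0 (fun t : Fin k => y ⟨m - k + t.1, by have := t.2; omega⟩), mul_one]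
  -- marginalization of psi
  have key : ∀ (pi0 : (Fin k → S) → ℝ) (a0 : (Fin (k + 1) → S) → ℝ),
      (∀ h : Fin k → S, (∑ j : S, a0 (Fin.snoc h j)) = 1) →
      ∀ (m : ℕ) (hm : k ≤ m) (hmn : m ≤ n) (y : Fin m → S),
      (∑ x ∈ Finset.univ.filter
          (fun x : Fin n → S => ∀ i : Fin m, x (Fin.castLE hmn i) = y i),
        psi hkn pi0 a0 x)
      = pi0 (fun i => y (Fin.castLE hm i)) * ∏ ℓ : Fin (m - k),
          a0 (fun t => y ⟨ℓ.1 + t.1, by have := ℓ.2; have := t.2; omega⟩) := by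
    intro pi0 a0 ha0 m hm hmn y
    have h1 : ∀ x ∈ Finset.univ.filter
        (fun x : Fin n → S => ∀ i : Fin m, x (Fin.castLE hmn i) = y i),
        psi hkn pi0 a0 x
          = pi0 (fun i => y (Fin.castLE hm i)) * ∏ ℓ : Fin (n - k), a0 (window hkn ℓ x) := by
      intro x hx
      simp only [Finset.mem_filter, Finset.mem_univ, true_and] at hx
      unfold psi
      congr 1
      congr 1
      funext i
      exact hx ⟨i.1, by omega⟩
    rw [Finset.sum_congr rfl h1, ← Finset.mul_sum]
    congr 1
    exact aux a0 ha0 (n - m) m hm (by omega) y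
  -- identify pi
  have hpieq : pi = pi' := by
    funext w
    have h1 := key pi a hasum k le_rfl hkn.le w
    have h2 := key pi' a' hasum' k le_rfl hkn.le w
    rw [heq] at h1
    have hone : (∏ ℓ : Fin (k - k),
        a (fun t => w ⟨ℓ.1 + t.1, by have := ℓ.2; have := t.2; omega⟩)) = 1 :=
      Finset.prod_eq_one (fun ℓ _ => absurd ℓ.2 (by omega))
    have hone' : (∏ ℓ : Fin (k - k),
        a' (fun t => w ⟨ℓ.1 + t.1, by have := ℓ.2; have := t.2; omega⟩)) = 1 :=
      Finset.prod_eq_one (fun ℓ _ => absurd ℓ.2 (by omega))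
    rw [hone, mul_one] at h1
    rw [hone', mul_one] at h2
    have := h1.symm.trans h2
    exact this
  refine ⟨hpieq, ?_⟩
  funext v
  have h1 := key pi a hasum (k + 1) (Nat.le_succ k) hkn v
  have h2 := key pi' a' hasum' (k + 1) (Nat.le_succ k) hkn v
  rw [heq] at h1
  have e1 : 1 = k + 1 - k := by omega
  have hv : ∀ (b : (Fin (k + 1) → S) → ℝ), (∏ ℓ : Fin (k + 1 - k),
      b (fun t => v ⟨ℓ.1 + t.1, by have := ℓ.2; have := t.2; omega⟩)) = b v := by
    intro b
    rw [← Fin.prod_congr' _ e1, Fin.prod_univ_one]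
    congr 1
    funext t
    congr 1
    ext
    simp
  rw [hv a] at h1
  rw [hv a'] at h2
  rw [hpieq] at h1
  have h3 := h1.symm.trans h2
  exact mul_left_cancel₀ (ne_of_gt (hpi' _)) h3


end MSM
end

section
/- Let S be a nonempty finite set and 1 ≤ k < n integers. Let u : S^n → ℕ be a vector of observed counts with total count M = Σ_{x∈S^n} u_x > 0, and for positions R ⊆ {1,…,n} and fixed values, let the marginal count be the sum of u over all paths agreeing with those values on R. Assume that for every j ∈ {k+1,…,n−1} and every w ∈ S^k, the marginal count of u at positions (j−k+1,…,j) with values w is nonzero. Define p̂ ∈ ℝ^{S^n} by p̂_x = (1/M)·(∏_{j=k+1}^n u|_{(j−k,…,j)=(x_{j−k},…,x_j)}) / (∏_{j=k+1}^{n−1} u|_{(j−k+1,…,j)=(x_{j−k+1},…,x_j)}). Then p̂ lies in the model φ(Θ), and for every q ∈ φ(Θ) one has ∏_{x∈S^n} q_x^{u_x} ≤ ∏_{x∈S^n} p̂_x^{u_x}; that is, p̂ is the maximum likelihood estimate over the nonhomogeneous k-th order multistate Markov model. -/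
open MvPolynomial

namespace MSM

variable {S : Type*}

/-- Marginal count: the sum of the counts `u y` over all paths `y` whose length-`m` segment
starting at position `s` equals `w`. -/
def margin [Fintype S] [DecidableEq S] {n : ℕ} (u : (Fin n → S) → ℕ)
    (s m : ℕ) (h : s + m ≤ n) (w : Fin m → S) : ℕ :=
  ∑ y : Fin n → S, if seg s m h y = w then u y else 0

/-- The closed-form MLE for the nonhomogeneous `k`-th order multistate Markov model:
`p̂_x = (1/M) · (∏_{windows} marginal window count at x) / (∏_{separators} marginal
`k`-block count at x)`. -/
noncomputable def pHat [Fintype S] [DecidableEq S] {n k : ℕ} (hkn : k < n)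
    (u : (Fin n → S) → ℕ) (x : Fin n → S) : ℝ :=
  (1 / (∑ y : Fin n → S, u y : ℝ)) *
    (∏ ℓ : Fin (n - k), (margin u ℓ.1 (k + 1) (by have := ℓ.isLt; omega)
        (seg ℓ.1 (k + 1) (by have := ℓ.isLt; omega) x) : ℝ)) /
    (∏ m : Fin (n - k - 1), (margin u (m.1 + 1) k (by have := m.isLt; omega)
        (seg (m.1 + 1) k (by have := m.isLt; omega) x) : ℝ))

/-- The nonhomogeneous `k`-th order multistate Markov model `φ(Θ)`: the image of the stochastic
parameters under the parametrization `φ`. -/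
def modelNH [Fintype S] {n k : ℕ} (hkn : k < n) : Set ((Fin n → S) → ℝ) :=
  { p | ∃ (pi : (Fin k → S) → ℝ) (a : Fin (n - k) → (Fin (k + 1) → S) → ℝ),
      (∀ w, 0 ≤ pi w) ∧ (∑ w : Fin k → S, pi w) = 1 ∧
      (∀ (ℓ : Fin (n - k)) (h : Fin k → S),
        (∀ j : S, 0 ≤ a ℓ (Fin.snoc h j)) ∧ (∑ j : S, a ℓ (Fin.snoc h j)) = 1) ∧
      p = phi hkn pi a }

/-! ### Auxiliary lemmas for the MLE theorem -/

section Aux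

lemma margin_congr [Fintype S] [DecidableEq S] {n : ℕ} (u : (Fin n → S) → ℕ)
    {s s' m : ℕ} (hss : s = s') {h : s + m ≤ n} {h' : s' + m ≤ n} (w : Fin m → S) :
    margin u s m h w = margin u s' m h' w := by subst hss; rfl

lemma seg_congr {n : ℕ} {s s' m : ℕ} (hss : s = s') {h : s + m ≤ n} {h' : s' + m ≤ n}
    (x : Fin n → S) : seg s m h x = seg s' m h' x := by subst hss; rfl

lemma init_seg {n k ℓ : ℕ} (h1 : ℓ + (k + 1) ≤ n) (h2 : ℓ + k ≤ n) (x : Fin n → S) :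
    Fin.init (seg ℓ (k + 1) h1 x) = seg ℓ k h2 x := by
  funext t
  simp only [Fin.init, seg]
  congr 1

lemma seg_succ_eq_snoc_iff {n k ℓ : ℕ} (h1 : ℓ + (k + 1) ≤ n) (h2 : ℓ + k ≤ n)
    (y : Fin n → S) (h : Fin k → S) (j : S) :
    seg ℓ (k + 1) h1 y = Fin.snoc h j ↔
      (seg ℓ k h2 y = h ∧ y ⟨ℓ + k, by omega⟩ = j) := by
  constructor
  · intro he
    refine ⟨?_, ?_⟩
    · funext t
      have := congrFun he (Fin.castSucc t)
      simpa [seg, Fin.snoc_castSucc] using this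
    · have := congrFun he (Fin.last k)
      simpa [seg, Fin.snoc_last] using this
  · rintro ⟨hA, hB⟩
    funext t
    refine Fin.lastCases ?_ (fun t => ?_) t
    · simpa [seg, Fin.snoc_last] using hB
    · have := congrFun hA t
      simpa [seg, Fin.snoc_castSucc] using this

lemma seg_eq_snoc {n k ℓ : ℕ} (h1 : ℓ + (k + 1) ≤ n) (h2 : ℓ + k ≤ n) (y : Fin n → S) :
    seg ℓ (k + 1) h1 y = Fin.snoc (seg ℓ k h2 y) (y ⟨ℓ + k, by omega⟩) :=
  (seg_succ_eq_snoc_iff h1 h2 y _ _).mpr ⟨rfl, rfl⟩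

lemma pathInit_eq_seg {n k : ℕ} (hk : k ≤ n) (h0 : 0 + k ≤ n) (x : Fin n → S) :
    pathInit hk x = seg 0 k h0 x := by
  funext t
  simp only [pathInit, seg, Fin.castLE]
  congr 1
  exact Fin.ext (by simp)

lemma window_eq_seg {n k : ℕ} (hkn : k < n) (ℓ : Fin (n - k))
    (h1 : ℓ.1 + (k + 1) ≤ n) (x : Fin n → S) :
    window hkn ℓ x = seg ℓ.1 (k + 1) h1 x := rfl

lemma sum_margin_snoc [Fintype S] [DecidableEq S] {n k : ℕ} (u : (Fin n → S) → ℕ)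
    {ℓ : ℕ} (h1 : ℓ + (k + 1) ≤ n) (h2 : ℓ + k ≤ n) (h : Fin k → S) :
    ∑ j : S, margin u ℓ (k + 1) h1 (Fin.snoc h j) = margin u ℓ k h2 h := by
  unfold margin
  rw [Finset.sum_comm]
  refine Finset.sum_congr rfl fun y _ => ?_
  simp only [seg_succ_eq_snoc_iff h1 h2]
  by_cases hP : seg ℓ k h2 y = h
  · simp [hP]
  · simp [hP]

lemma margin_snoc_le [Fintype S] [DecidableEq S] {n k : ℕ} (u : (Fin n → S) → ℕ)
    {ℓ : ℕ} (h1 : ℓ + (k + 1) ≤ n) (h2 : ℓ + k ≤ n) (h : Fin k → S) (j : S) :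
    margin u ℓ (k + 1) h1 (Fin.snoc h j) ≤ margin u ℓ k h2 h := by
  rw [← sum_margin_snoc u h1 h2 h]
  exact Finset.single_le_sum (f := fun j => margin u ℓ (k + 1) h1 (Fin.snoc h j))
    (fun i _ => Nat.zero_le _) (Finset.mem_univ j)

lemma sum_margin_total [Fintype S] [DecidableEq S] {n : ℕ} (u : (Fin n → S) → ℕ)
    (s m : ℕ) (h : s + m ≤ n) :
    ∑ w : Fin m → S, margin u s m h w = ∑ y, u y := by
  unfold margin
  rw [Finset.sum_comm]
  exact Finset.sum_congr rfl fun y _ => by simp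

lemma prod_pow_comp {α β : Type*} [Fintype α] [Fintype β] [DecidableEq β]
    (T : α → β) (u : α → ℕ) (g : β → ℝ) :
    ∏ x, g (T x) ^ u x = ∏ v, g v ^ (∑ x, if T x = v then u x else 0) := by
  have : ∀ v : β, g v ^ (∑ x, if T x = v then u x else 0)
      = ∏ x, if T x = v then g v ^ u x else 1 := by
    intro v
    rw [← Finset.prod_pow_eq_pow_sum]
    exact Finset.prod_congr rfl fun x _ => by split <;> simp
  simp only [this]
  rw [Finset.prod_comm]
  refine Finset.prod_congr rfl fun x _ => ?_
  have : ∀ v : β, (if T x = v then g v ^ u x else 1) =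
      (if T x = v then g (T x) ^ u x else 1) := by
    intro v; split <;> simp_all
  simp only [this]
  simp

lemma prod_fin_split {M : Type*} [CommMonoid M] {N : ℕ} (hN : 0 < N) (F : Fin N → M) :
    ∏ ℓ, F ℓ = F ⟨0, hN⟩ * ∏ m : Fin (N - 1), F ⟨m.1 + 1, by omega⟩ := by
  obtain ⟨N', rfl⟩ : ∃ N', N = N' + 1 := ⟨N - 1, by omega⟩
  rw [Fin.prod_univ_succ]
  congr 1

/-- Snoc as an equivalence. -/
def snocE (S : Type*) (k : ℕ) : (Fin k → S) × S ≃ (Fin (k + 1) → S) where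
  toFun p := Fin.snoc p.1 p.2
  invFun v := (Fin.init v, v (Fin.last k))
  left_inv p := by simp
  right_inv v := by simp

/-- Gibbs' inequality: a subprobability vector's likelihood is at most that of the
empirical frequencies. -/
lemma gibbs {ι : Type*} [Fintype ι] [DecidableEq ι] (c : ι → ℕ) (q : ι → ℝ)
    (hq0 : ∀ i, 0 ≤ q i) (hq1 : ∑ i, q i ≤ 1) :
    ∏ i, q i ^ c i ≤ ∏ i, ((c i : ℝ) / (∑ j, (c j : ℝ))) ^ c i := by
  set N : ℝ := ∑ j, (c j : ℝ) with hN
  have hN0 : 0 ≤ N := Finset.sum_nonneg fun i _ => Nat.cast_nonneg _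
  rcases eq_or_lt_of_le hN0 with h0 | hNpos
  · have hc : ∀ i, c i = 0 := by
      intro i
      have := (Finset.sum_eq_zero_iff_of_nonneg
        (fun i _ => Nat.cast_nonneg (α := ℝ) (c i))).mp h0.symm i (Finset.mem_univ i)
      exact_mod_cast this
    simp [hc]
  · by_cases hz : ∃ i, c i ≠ 0 ∧ q i = 0
    · obtain ⟨i, hci, hqi⟩ := hz
      have hL : ∏ i, q i ^ c i = 0 :=
        Finset.prod_eq_zero (Finset.mem_univ i) (by simp [hqi, hci])
      rw [hL]
      exact Finset.prod_nonneg fun j _ => pow_nonneg (div_nonneg (Nat.cast_nonneg _) hN0) _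
    · push_neg at hz
      have hqpos : ∀ i, c i ≠ 0 → 0 < q i := fun i hi => (hq0 i).lt_of_ne (Ne.symm (hz i hi))
      set s : Finset ι := Finset.univ.filter (fun i => c i ≠ 0) with hs
      have hcs : ∀ i, i ∈ s ↔ c i ≠ 0 := fun i => by simp [hs]
      have hL : ∏ i, q i ^ c i = ∏ i ∈ s, q i ^ c i := by
        refine (Finset.prod_subset (Finset.subset_univ s) fun i _ hi => ?_).symm
        have : c i = 0 := by by_contra h; exact hi ((hcs i).mpr h)
        simp [this]
      have hR : ∏ i, ((c i : ℝ) / N) ^ c i = ∏ i ∈ s, ((c i : ℝ) / N) ^ c i := by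
        refine (Finset.prod_subset (Finset.subset_univ s) fun i _ hi => ?_).symm
        have : c i = 0 := by by_contra h; exact hi ((hcs i).mpr h)
        simp [this]
      rw [hL, hR]
      have hcpos : ∀ i ∈ s, (0 : ℝ) < (c i : ℝ) := fun i hi =>
        Nat.cast_pos.mpr (Nat.pos_of_ne_zero ((hcs i).mp hi))
      have hLpos : 0 < ∏ i ∈ s, q i ^ c i :=
        Finset.prod_pos fun i hi => pow_pos (hqpos i ((hcs i).mp hi)) _
      have hRpos : 0 < ∏ i ∈ s, ((c i : ℝ) / N) ^ c i :=
        Finset.prod_pos fun i hi => pow_pos (div_pos (hcpos i hi) hNpos) _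
      rw [← Real.log_le_log_iff hLpos hRpos]
      rw [Real.log_prod (fun i hi => ne_of_gt (pow_pos (hqpos i ((hcs i).mp hi)) _)),
        Real.log_prod (fun i hi => ne_of_gt (pow_pos (div_pos (hcpos i hi) hNpos) _))]
      simp only [Real.log_pow]
      rw [← sub_nonpos, ← Finset.sum_sub_distrib]
      have hsum : ∑ i ∈ s, (c i : ℝ) = N := by
        rw [hN]
        refine Finset.sum_subset (Finset.subset_univ s) fun i _ hi => ?_
        have : c i = 0 := by by_contra h; exact hi ((hcs i).mpr h)
        simp [this]
      have hqsub : ∑ i ∈ s, q i ≤ 1 :=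
        le_trans (Finset.sum_le_sum_of_subset_of_nonneg (Finset.subset_univ s)
          (fun i _ _ => hq0 i)) hq1
      calc ∑ i ∈ s, ((c i : ℝ) * Real.log (q i) - (c i : ℝ) * Real.log ((c i : ℝ) / N))
          ≤ ∑ i ∈ s, (q i * N - (c i : ℝ)) := by
            refine Finset.sum_le_sum fun i hi => ?_
            have hci : (0 : ℝ) < (c i : ℝ) := hcpos i hi
            have hqi : 0 < q i := hqpos i ((hcs i).mp hi)
            have h1 : (c i : ℝ) * Real.log (q i) - (c i : ℝ) * Real.log ((c i : ℝ) / N)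
                = (c i : ℝ) * Real.log (q i * N / (c i : ℝ)) := by
              rw [← mul_sub]
              congr 1
              rw [Real.log_div (by positivity) (by positivity),
                Real.log_div (by positivity) (by positivity),
                Real.log_mul (by positivity) (by positivity)]
              ring
            rw [h1]
            have h2 : Real.log (q i * N / (c i : ℝ)) ≤ q i * N / (c i : ℝ) - 1 :=
              Real.log_le_sub_one_of_pos (by positivity)
            calc (c i : ℝ) * Real.log (q i * N / (c i : ℝ))
                ≤ (c i : ℝ) * (q i * N / (c i : ℝ) - 1) :=
                  mul_le_mul_of_nonneg_left h2 hci.le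
              _ = q i * N - (c i : ℝ) := by field_simp
        _ = (∑ i ∈ s, q i) * N - ∑ i ∈ s, (c i : ℝ) := by
            rw [Finset.sum_sub_distrib, Finset.sum_mul]
        _ ≤ 1 * N - N := by
            rw [hsum]
            have : (∑ i ∈ s, q i) * N ≤ 1 * N :=
              mul_le_mul_of_nonneg_right hqsub hN0
            linarith
        _ = 0 := by ring

/-- Factorization of the likelihood of a point of the parametrized family. -/
lemma likelihood_phi [Fintype S] [DecidableEq S] {n k : ℕ} (hkn : k < n)
    (u : (Fin n → S) → ℕ) (pi : (Fin k → S) → ℝ)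
    (a : Fin (n - k) → (Fin (k + 1) → S) → ℝ) :
    ∏ x : Fin n → S, (phi hkn pi a x) ^ u x
      = (∏ w : Fin k → S, pi w ^ margin u 0 k (by omega) w)
        * ∏ ℓ : Fin (n - k), ∏ v : Fin (k + 1) → S,
            a ℓ v ^ margin u ℓ.1 (k + 1) (by have := ℓ.isLt; omega) v := by
  have h0 : (0 : ℕ) + k ≤ n := by omega
  have hstep : ∀ x : Fin n → S, (phi hkn pi a x) ^ u x
      = pi (pathInit hkn.le x) ^ u x * ∏ ℓ : Fin (n - k), a ℓ (window hkn ℓ x) ^ u x := by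
    intro x
    rw [phi, mul_pow, Finset.prod_pow]
  simp only [hstep]
  rw [Finset.prod_mul_distrib]
  congr 1
  · rw [prod_pow_comp (fun x => pathInit hkn.le x) u pi]
    refine Finset.prod_congr rfl fun w _ => ?_
    congr 1
    unfold margin
    refine Finset.sum_congr rfl fun y _ => ?_
    rw [pathInit_eq_seg hkn.le h0]
  · rw [Finset.prod_comm]
    refine Finset.prod_congr rfl fun ℓ _ => ?_
    rw [prod_pow_comp (fun x => window hkn ℓ x) u (a ℓ)]
    refine Finset.prod_congr rfl fun v _ => ?_
    congr 1

/-- The MLE initial distribution: empirical frequencies of the first `k` entries. -/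
noncomputable def piHat [Fintype S] [DecidableEq S] {n k : ℕ} (hkn : k < n)
    (u : (Fin n → S) → ℕ) : (Fin k → S) → ℝ :=
  fun w => (margin u 0 k (by omega) w : ℝ) / (∑ y : Fin n → S, (u y : ℝ))

/-- The MLE transition probabilities: empirical conditional frequencies. -/
noncomputable def aHat [Fintype S] [DecidableEq S] {n k : ℕ} (hkn : k < n)
    (u : (Fin n → S) → ℕ) : Fin (n - k) → (Fin (k + 1) → S) → ℝ :=
  fun ℓ v =>
    if margin u ℓ.1 k (by have := ℓ.isLt; omega) (Fin.init v) = 0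
    then ((Fintype.card S : ℝ))⁻¹
    else (margin u ℓ.1 (k + 1) (by have := ℓ.isLt; omega) v : ℝ)
      / (margin u ℓ.1 k (by have := ℓ.isLt; omega) (Fin.init v) : ℝ)

lemma telescope_aux {N : ℕ} (hN : 0 < N) (W Sp : Fin N → ℝ) (M c : ℝ)
    (hSp : ∀ ℓ : Fin N, 0 < ℓ.1 → Sp ℓ ≠ 0)
    (hW0 : Sp ⟨0, hN⟩ = 0 → W ⟨0, hN⟩ = 0) :
    (1 / M) * (∏ ℓ, W ℓ) / (∏ m : Fin (N - 1), Sp ⟨m.1 + 1, by omega⟩)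
      = (Sp ⟨0, hN⟩ / M) * ∏ ℓ, (if Sp ℓ = 0 then c else W ℓ / Sp ℓ) := by
  by_cases h0 : Sp ⟨0, hN⟩ = 0
  · rw [h0, Finset.prod_eq_zero (Finset.mem_univ (⟨0, hN⟩ : Fin N)) (hW0 h0)]
    simp
  · have hall : ∀ ℓ : Fin N, Sp ℓ ≠ 0 := by
      intro ℓ
      rcases Nat.eq_zero_or_pos ℓ.1 with h | h
      · have : ℓ = ⟨0, hN⟩ := Fin.ext h
        rwa [this]
      · exact hSp ℓ h
    have hif : ∀ ℓ, (if Sp ℓ = 0 then c else W ℓ / Sp ℓ) = W ℓ / Sp ℓ :=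
      fun ℓ => if_neg (hall ℓ)
    simp only [hif]
    rw [Finset.prod_div_distrib, prod_fin_split hN Sp]
    rw [one_div, inv_mul_eq_div, div_div, div_mul_div_comm]
    rw [show M * (Sp ⟨0, hN⟩ * ∏ m : Fin (N - 1), Sp ⟨m.1 + 1, by omega⟩)
        = Sp ⟨0, hN⟩ * (M * ∏ m : Fin (N - 1), Sp ⟨m.1 + 1, by omega⟩) by ring]
    rw [mul_div_mul_left _ _ h0]

lemma piHat_stoch [Fintype S] [DecidableEq S] {n k : ℕ} (hkn : k < n)
    (u : (Fin n → S) → ℕ) (hM : 0 < ∑ x : Fin n → S, u x) :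
    (∀ w, 0 ≤ piHat hkn u w) ∧ (∑ w : Fin k → S, piHat hkn u w) = 1 := by
  have hM0 : (0 : ℝ) < ∑ y : Fin n → S, (u y : ℝ) := by
    rw [← Nat.cast_sum]; exact_mod_cast hM
  constructor
  · intro w
    exact div_nonneg (Nat.cast_nonneg _) hM0.le
  · rw [show (∑ w : Fin k → S, piHat hkn u w)
        = (∑ w : Fin k → S, (margin u 0 k (by omega) w : ℝ)) / (∑ y : Fin n → S, (u y : ℝ))
        from by rw [Finset.sum_div]; rfl]
    rw [← Nat.cast_sum, sum_margin_total u 0 k (by omega), Nat.cast_sum]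
    exact div_self hM0.ne'

lemma aHat_stoch [Fintype S] [DecidableEq S] [Nonempty S] {n k : ℕ} (hkn : k < n)
    (u : (Fin n → S) → ℕ) (ℓ : Fin (n - k)) (h : Fin k → S) :
    (∀ j : S, 0 ≤ aHat hkn u ℓ (Fin.snoc h j)) ∧
      (∑ j : S, aHat hkn u ℓ (Fin.snoc h j)) = 1 := by
  have hwin : ℓ.1 + (k + 1) ≤ n := by have := ℓ.isLt; omega
  have hsep : ℓ.1 + k ≤ n := by have := ℓ.isLt; omega
  have hcard : (0 : ℝ) < (Fintype.card S : ℝ) := by exact_mod_cast Fintype.card_pos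
  have hform : ∀ j : S, aHat hkn u ℓ (Fin.snoc h j)
      = if margin u ℓ.1 k hsep h = 0 then ((Fintype.card S : ℝ))⁻¹
        else (margin u ℓ.1 (k + 1) hwin (Fin.snoc h j) : ℝ) / (margin u ℓ.1 k hsep h : ℝ) := by
    intro j
    simp only [aHat, Fin.init_snoc]
  by_cases hms : margin u ℓ.1 k hsep h = 0
  · constructor
    · intro j
      rw [hform j, if_pos hms]
      positivity
    · simp only [hform, if_pos hms]
      rw [Finset.sum_const, Finset.card_univ, nsmul_eq_mul]
      exact mul_inv_cancel₀ hcard.ne'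
  · have hmspos : (0 : ℝ) < (margin u ℓ.1 k hsep h : ℝ) := by
      exact_mod_cast Nat.pos_of_ne_zero hms
    constructor
    · intro j
      rw [hform j, if_neg hms]
      positivity
    · simp only [hform, if_neg hms]
      rw [← Finset.sum_div, ← Nat.cast_sum, sum_margin_snoc u hwin hsep h]
      exact div_self hmspos.ne'

lemma pHat_eq_phi [Fintype S] [DecidableEq S] {n k : ℕ} (hkn : k < n)
    (u : (Fin n → S) → ℕ)
    (hpos : ∀ (m : Fin (n - k - 1)) (w : Fin k → S),
      margin u (m.1 + 1) k (by have := m.isLt; omega) w ≠ 0) :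
    pHat hkn u = phi hkn (piHat hkn u) (aHat hkn u) := by
  have hnk : 0 < n - k := by omega
  have hwin : ∀ ℓ : Fin (n - k), ℓ.1 + (k + 1) ≤ n := fun ℓ => by have := ℓ.isLt; omega
  have hsep : ∀ ℓ : Fin (n - k), ℓ.1 + k ≤ n := fun ℓ => by have := ℓ.isLt; omega
  have h0k : (0 : ℕ) + k ≤ n := by omega
  have key : ∀ ℓ : Fin (n - k), 0 < ℓ.1 → ∀ w : Fin k → S,
      margin u ℓ.1 k (hsep ℓ) w ≠ 0 := by
    intro ℓ hℓ w
    have hm : ℓ.1 - 1 < n - k - 1 := by have := ℓ.isLt; omega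
    have h : margin u (ℓ.1 - 1 + 1) k (by have := ℓ.isLt; omega) w ≠ 0 := hpos ⟨ℓ.1 - 1, hm⟩ w
    rwa [margin_congr u (show ℓ.1 - 1 + 1 = ℓ.1 by omega) (h' := hsep ℓ)] at h
  funext x
  have hx : ∀ ℓ : Fin (n - k), aHat hkn u ℓ (window hkn ℓ x)
      = (if (margin u ℓ.1 k (hsep ℓ) (seg ℓ.1 k (hsep ℓ) x) : ℝ) = 0
         then ((Fintype.card S : ℝ))⁻¹
         else (margin u ℓ.1 (k + 1) (hwin ℓ) (seg ℓ.1 (k + 1) (hwin ℓ) x) : ℝ)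
           / (margin u ℓ.1 k (hsep ℓ) (seg ℓ.1 k (hsep ℓ) x) : ℝ)) := by
    intro ℓ
    rw [window_eq_seg hkn ℓ (hwin ℓ)]
    simp only [aHat]
    rw [init_seg (hwin ℓ) (hsep ℓ)]
    by_cases hz : margin u ℓ.1 k (hsep ℓ) (seg ℓ.1 k (hsep ℓ) x) = 0
    · simp [hz]
    · simp [hz]
  rw [pHat, phi]
  simp only [hx, piHat]
  rw [pathInit_eq_seg hkn.le h0k]
  have hle : margin u 0 (k + 1) (by omega) (seg 0 (k + 1) (by omega) x)
      ≤ margin u 0 k h0k (seg 0 k h0k x) := by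
    rw [seg_eq_snoc (show (0 : ℕ) + (k + 1) ≤ n by omega) h0k x]
    exact margin_snoc_le u _ h0k _ _
  exact telescope_aux hnk
    (fun ℓ => (margin u ℓ.1 (k + 1) (hwin ℓ) (seg ℓ.1 (k + 1) (hwin ℓ) x) : ℝ))
    (fun ℓ => (margin u ℓ.1 k (hsep ℓ) (seg ℓ.1 k (hsep ℓ) x) : ℝ))
    (∑ y : Fin n → S, (u y : ℝ)) ((Fintype.card S : ℝ))⁻¹
    (fun ℓ hℓ => by
      show (margin u ℓ.1 k (hsep ℓ) (seg ℓ.1 k (hsep ℓ) x) : ℝ) ≠ 0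
      exact_mod_cast key ℓ hℓ _)
    (fun h0 => by
      have h0'' : (margin u 0 k h0k (seg 0 k h0k x) : ℝ) = 0 := h0
      have h0' : margin u 0 k h0k (seg 0 k h0k x) = 0 := by exact_mod_cast h0''
      have hz : margin u 0 (k + 1) (show (0 : ℕ) + (k + 1) ≤ n by omega)
          (seg 0 (k + 1) (show (0 : ℕ) + (k + 1) ≤ n by omega) x) = 0 := by omega
      show (margin u 0 (k + 1) (show (0 : ℕ) + (k + 1) ≤ n by omega)
          (seg 0 (k + 1) (show (0 : ℕ) + (k + 1) ≤ n by omega) x) : ℝ) = 0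
      exact_mod_cast hz)

end Aux

/-- Under the nonvanishing assumption on the separator marginal counts, the closed-form
estimator `p̂` lies in the nonhomogeneous model and maximizes the likelihood over the model. -/
theorem stmt14 (S : Type*) [Fintype S] [DecidableEq S] [Nonempty S]
    (n k : ℕ) (hk : 1 ≤ k) (hkn : k < n)
    (u : (Fin n → S) → ℕ) (hM : 0 < ∑ x : Fin n → S, u x)
    (hpos : ∀ (m : Fin (n - k - 1)) (w : Fin k → S),
      margin u (m.1 + 1) k (by have := m.isLt; omega) w ≠ 0) :
    pHat hkn u ∈ modelNH hkn ∧
      ∀ q ∈ modelNH hkn,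
        (∏ x : Fin n → S, q x ^ u x) ≤ ∏ x : Fin n → S, pHat hkn u x ^ u x := by
  classical
  have hwin : ∀ ℓ : Fin (n - k), ℓ.1 + (k + 1) ≤ n := fun ℓ => by have := ℓ.isLt; omega
  have hsep : ∀ ℓ : Fin (n - k), ℓ.1 + k ≤ n := fun ℓ => by have := ℓ.isLt; omega
  have h0k : (0 : ℕ) + k ≤ n := by omega
  have hphi_eq : pHat hkn u = phi hkn (piHat hkn u) (aHat hkn u) := pHat_eq_phi hkn u hpos
  have hpi := piHat_stoch hkn u hM
  constructor
  · exact ⟨piHat hkn u, aHat hkn u, hpi.1, hpi.2, fun ℓ h => aHat_stoch hkn u ℓ h, hphi_eq⟩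
  · rintro q ⟨pi, a, hpi0', hpi1', ha', rfl⟩
    rw [hphi_eq]
    rw [likelihood_phi hkn u pi a, likelihood_phi hkn u (piHat hkn u) (aHat hkn u)]
    have hanneg : ∀ (ℓ : Fin (n - k)) (v : Fin (k + 1) → S), 0 ≤ a ℓ v := by
      intro ℓ v
      have := (ha' ℓ (Fin.init v)).1 (v (Fin.last k))
      rwa [Fin.snoc_init_self] at this
    have hsumM : (∑ j : Fin k → S, (margin u 0 k h0k j : ℝ)) = ∑ y : Fin n → S, (u y : ℝ) := by
      rw [← Nat.cast_sum, sum_margin_total u 0 k h0k, Nat.cast_sum]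
    apply mul_le_mul
    · -- initial-distribution part
      refine le_trans (gibbs (fun w => margin u 0 k h0k w) pi hpi0' (le_of_eq hpi1'))
        (le_of_eq (Finset.prod_congr rfl fun w _ => ?_))
      congr 1
      rw [hsumM]
      rfl
    · -- transition part
      refine Finset.prod_le_prod
        (fun ℓ _ => Finset.prod_nonneg fun v _ => pow_nonneg (hanneg ℓ v) _)
        (fun ℓ _ => ?_)
      rw [← Equiv.prod_comp (snocE S k)
          (fun v => a ℓ v ^ margin u ℓ.1 (k + 1) (hwin ℓ) v),
        ← Equiv.prod_comp (snocE S k)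
          (fun v => aHat hkn u ℓ v ^ margin u ℓ.1 (k + 1) (hwin ℓ) v)]
      simp only [snocE, Equiv.coe_fn_mk]
      rw [Fintype.prod_prod_type, Fintype.prod_prod_type]
      refine Finset.prod_le_prod
        (fun h _ => Finset.prod_nonneg fun j _ => pow_nonneg (hanneg ℓ _) _)
        (fun h _ => ?_)
      refine le_trans (gibbs (fun j => margin u ℓ.1 (k + 1) (hwin ℓ) (Fin.snoc h j))
          (fun j => a ℓ (Fin.snoc h j)) (ha' ℓ h).1 (le_of_eq (ha' ℓ h).2))
        (le_of_eq (Finset.prod_congr rfl fun j _ => ?_))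
      have hsum : (∑ j' : S, (margin u ℓ.1 (k + 1) (hwin ℓ) (Fin.snoc h j') : ℝ))
          = (margin u ℓ.1 k (hsep ℓ) h : ℝ) := by
        rw [← Nat.cast_sum, sum_margin_snoc u (hwin ℓ) (hsep ℓ)]
      rw [hsum]
      by_cases hms : margin u ℓ.1 k (hsep ℓ) h = 0
      · have hcz : margin u ℓ.1 (k + 1) (hwin ℓ) (Fin.snoc h j) = 0 :=
          Nat.le_zero.mp (hms ▸ margin_snoc_le u (hwin ℓ) (hsep ℓ) h j)
        simp [hcz]
      · simp only [aHat, Fin.init_snoc]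
        rw [if_neg hms]
    · exact Finset.prod_nonneg fun ℓ _ =>
        Finset.prod_nonneg fun v _ => pow_nonneg (hanneg ℓ v) _
    · exact Finset.prod_nonneg fun w _ => pow_nonneg (hpi.1 w) _

end MSM
end
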